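/- arXiv:2511.06151 — 15 statements merged into one kernel-verified Lean document; each statement's English description precedes it below -/
import Mathlib

section
/- Let P be a finite lattice and let T₁, T₂ be transfer systems on P. Then the join T₁ ∨ T₂ in the poset of transfer systems ordered by inclusion exists and is given by ⟨T₁ ∪ T₂⟩, the smallest transfer system containing T₁ ∪ T₂; moreover ⟨T₁ ∪ T₂⟩ is obtained by closing T₁ ∪ T₂ under composition (transitivity). -/
variable {P : Type*}

section Defs
variable [Lattice P]

/-- A wide subcategory of the poset category of `P`: contains all identities,
refines `≤`, and is closed under composition. -/
def IsWide (R : P → P → Prop) : Prop :=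
  (∀ x, R x x) ∧ (∀ x y, R x y → x ≤ y) ∧ (∀ x y z, R x y → R y z → R x z)

/-- A decomposable subcategory: if a composite is in `R`, so are both factors. -/
def IsDecomposable (R : P → P → Prop) : Prop :=
  ∀ x y z : P, x ≤ y → y ≤ z → R x z → R x y ∧ R y z

/-- A transfer system: a partial order refining `≤`, closed under restriction
(pullback) along meets. -/
def IsTransferSystem (R : P → P → Prop) : Prop :=
  (∀ x, R x x) ∧ (∀ x y z, R x y → R y z → R x z) ∧
  (∀ x y, R x y → R y x → x = y) ∧
  (∀ x y, R x y → x ≤ y) ∧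
  (∀ x y z, R x y → z ≤ y → R (x ⊓ z) z)

/-- A cotransfer system: a partial order refining `≤`, closed under
cobase change (pushout) along joins. -/
def IsCotransferSystem (R : P → P → Prop) : Prop :=
  (∀ x, R x x) ∧ (∀ x y z, R x y → R y z → R x z) ∧
  (∀ x y, R x y → R y x → x = y) ∧
  (∀ x y, R x y → x ≤ y) ∧
  (∀ x y z, R x y → x ≤ z → R z (y ⊔ z))

/-- Closed under pullbacks: the pullback of `b → d` along `c → d` is `b ⊓ c → c`. -/
def PullbackClosed (R : P → P → Prop) : Prop :=
  ∀ b c d : P, R b d → c ≤ d → R (b ⊓ c) c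

/-- Closed under pushouts: the pushout of `a → b` along `a → c` is `c → b ⊔ c`. -/
def PushoutClosed (R : P → P → Prop) : Prop :=
  ∀ a b c : P, R a b → a ≤ c → R c (b ⊔ c)

/-- The left lifting class of a class `S` of morphisms of the poset category:
pairs `(a,b)` with `a ≤ b` having the left lifting property against every
member of `S`. -/
def LLP (S : P → P → Prop) (a b : P) : Prop :=
  a ≤ b ∧ ∀ x y, S x y → a ≤ x → b ≤ y → b ≤ x

/-- The right lifting class of a class `S` of morphisms of the poset category. -/
def RLP (S : P → P → Prop) (x y : P) : Prop :=
  x ≤ y ∧ ∀ a b, S a b → a ≤ x → b ≤ y → b ≤ x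

/-- A weak factorization system `(L, R)`: every morphism factors as a map in `L`
followed by a map in `R`, and `L = ᵇR`, `R = Lᵇ`. -/
def IsWFS (L R : P → P → Prop) : Prop :=
  (∀ x y : P, x ≤ y → ∃ z, L x z ∧ R z y) ∧
  (∀ a b, L a b ↔ LLP R a b) ∧
  (∀ x y, R x y ↔ RLP L x y)

/-- The composite class `S ∘ T` (first `T`, then `S`). -/
def Comp (S T : P → P → Prop) (x z : P) : Prop :=
  ∃ y, T x y ∧ S y z

/-- The two-out-of-three property for a class of morphisms. -/
def TwoOutOfThree (W : P → P → Prop) : Prop :=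
  ∀ x y z : P, x ≤ y → y ≤ z →
    ((W x y → W y z → W x z) ∧ (W x y → W x z → W y z) ∧ (W y z → W x z → W x y))

/-- A model structure on the poset category of `P`, given by acyclic
cofibrations, fibrations, cofibrations and acyclic fibrations: two weak
factorization systems `(AC, F)` and `(C, AF)` with `AC ⊆ C`, such that
`W := AF ∘ AC` satisfies two-out-of-three. -/
def IsModel (AC F C AF : P → P → Prop) : Prop :=
  IsWFS AC F ∧ IsWFS C AF ∧ (∀ x y, AC x y → C x y) ∧
  TwoOutOfThree (Comp AF AC)

/-- `T` occurs as the class of acyclic fibrations of a model structure whose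
class of weak equivalences is `W`. -/
def OccursAsAF (W T : P → P → Prop) : Prop :=
  ∃ AC F C, IsModel AC F C T ∧ ∀ x y, Comp T AC x y ↔ W x y

end Defs
/-- The join of two transfer systems exists, is the smallest transfer system
containing their union, and is obtained by closing the union under composition
(reflexive-transitive closure). -/
theorem join_of_transferSystems [Lattice P] [Fintype P]
    (T₁ T₂ : P → P → Prop) (h₁ : IsTransferSystem T₁) (h₂ : IsTransferSystem T₂) :
    IsTransferSystem (Relation.ReflTransGen (fun x y => T₁ x y ∨ T₂ x y)) ∧
    (∀ x y, T₁ x y → Relation.ReflTransGen (fun x y => T₁ x y ∨ T₂ x y) x y) ∧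
    (∀ x y, T₂ x y → Relation.ReflTransGen (fun x y => T₁ x y ∨ T₂ x y) x y) ∧
    (∀ T : P → P → Prop, IsTransferSystem T →
      (∀ x y, T₁ x y → T x y) → (∀ x y, T₂ x y → T x y) →
      ∀ x y, Relation.ReflTransGen (fun x y => T₁ x y ∨ T₂ x y) x y → T x y) := by
  obtain ⟨h1r, h1t, h1a, h1le, h1res⟩ := h₁
  obtain ⟨h2r, h2t, h2a, h2le, h2res⟩ := h₂
  set S := fun x y => T₁ x y ∨ T₂ x y with hS
  have hstep_le : ∀ x y, S x y → x ≤ y := by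
    rintro x y (h | h); exacts [h1le _ _ h, h2le _ _ h]
  have hle : ∀ x y, Relation.ReflTransGen S x y → x ≤ y := by
    intro x y h
    induction h with
    | refl => exact le_refl _
    | tail _ hbc ih => exact le_trans ih (hstep_le _ _ hbc)
  have hres : ∀ x y z, Relation.ReflTransGen S x y → z ≤ y →
      Relation.ReflTransGen S (x ⊓ z) z := by
    intro x y z h
    induction h using Relation.ReflTransGen.head_induction_on with
    | refl => intro hz; rw [inf_eq_right.mpr hz]
    | head hab hby ih =>
        rename_i a b
        intro hz
        have hab' : S (a ⊓ (b ⊓ z)) (b ⊓ z) := by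
          rcases hab with h | h
          · exact Or.inl (h1res _ _ _ h inf_le_left)
          · exact Or.inr (h2res _ _ _ h inf_le_left)
        have hx : a ⊓ (b ⊓ z) = a ⊓ z := by
          rw [← inf_assoc, inf_eq_left.mpr (hstep_le _ _ hab)]
        rw [hx] at hab'
        exact Relation.ReflTransGen.head hab' (ih hz)
  refine ⟨⟨fun x => Relation.ReflTransGen.refl,
    fun x y z hxy hyz => hxy.trans hyz,
    fun x y hxy hyx => le_antisymm (hle _ _ hxy) (hle _ _ hyx),
    hle,
    fun x y z hxy hz => hres x y z hxy hz⟩,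
    fun x y h => Relation.ReflTransGen.single (Or.inl h),
    fun x y h => Relation.ReflTransGen.single (Or.inr h),
    ?_⟩
  intro T hT hT1 hT2 x y h
  obtain ⟨hTr, hTt, _, _, _⟩ := hT
  induction h with
  | refl => exact hTr x
  | tail _ hbc ih =>
      rcases hbc with h | h
      exacts [hTt _ _ _ ih (hT1 _ _ h), hTt _ _ _ ih (hT2 _ _ h)]
end

section
/- Let Q be a wide subcategory of a finite lattice P that is closed under composition. If T₁ ⊆ Q and T₂ ⊆ Q are transfer systems on P, then the join T₁ ∨ T₂ (the smallest transfer system containing both) is also contained in Q. -/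
variable {P : Type*}

/-- If two transfer systems are contained in a wide subcategory `Q` (closed
under composition), then their join, the smallest transfer system containing
both, is also contained in `Q`. -/
theorem join_subset_of_wide [Lattice P] [Fintype P]
    (Q T₁ T₂ J : P → P → Prop) (hQ : IsWide Q)
    (h₁ : IsTransferSystem T₁) (h₂ : IsTransferSystem T₂)
    (h₁Q : ∀ x y, T₁ x y → Q x y) (h₂Q : ∀ x y, T₂ x y → Q x y)
    (hJts : IsTransferSystem J)
    (hJ₁ : ∀ x y, T₁ x y → J x y) (hJ₂ : ∀ x y, T₂ x y → J x y)
    (hJleast : ∀ T : P → P → Prop, IsTransferSystem T →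
      (∀ x y, T₁ x y → T x y) → (∀ x y, T₂ x y → T x y) → ∀ x y, J x y → T x y) :
    ∀ x y, J x y → Q x y := by
  obtain ⟨hQrefl, hQle, hQtrans⟩ := hQ
  obtain ⟨h₁r, h₁t, h₁a, h₁le, h₁res⟩ := h₁
  obtain ⟨h₂r, h₂t, h₂a, h₂le, h₂res⟩ := h₂
  set K : P → P → Prop := Relation.ReflTransGen (fun a b => T₁ a b ∨ T₂ a b) with hK
  have hKle : ∀ x y, K x y → x ≤ y := by
    intro x y h
    induction h with
    | refl => exact le_refl _
    | tail _ hbc ih =>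
      exact le_trans ih (hbc.elim (h₁le _ _) (h₂le _ _))
  have hKres : ∀ x y, K x y → ∀ z, z ≤ y → K (x ⊓ z) z := by
    intro x y h
    induction h with
    | refl => intro z hz; rw [inf_eq_right.mpr hz]
    | @tail b c hxb hbc ih =>
      intro z hz
      have hxz : x ⊓ (b ⊓ z) = x ⊓ z := by
        rw [← inf_assoc, inf_eq_left.mpr (hKle _ _ hxb)]
      have hstep : (fun a b => T₁ a b ∨ T₂ a b) (b ⊓ z) z := by
        rcases hbc with hb | hb
        · exact Or.inl (h₁res _ _ _ hb hz)
        · exact Or.inr (h₂res _ _ _ hb hz)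
      have := ih (b ⊓ z) inf_le_left
      rw [hxz] at this
      exact this.tail hstep
  have hKts : IsTransferSystem K := by
    refine ⟨fun x => Relation.ReflTransGen.refl,
      fun x y z hxy hyz => hxy.trans hyz,
      fun x y hxy hyx => le_antisymm (hKle _ _ hxy) (hKle _ _ hyx),
      hKle, fun x y z h hz => hKres x y h z hz⟩
  have hKQ : ∀ x y, K x y → Q x y := by
    intro x y h
    induction h with
    | refl => exact hQrefl _
    | tail _ hbc ih =>
      exact hQtrans _ _ _ ih (hbc.elim (h₁Q _ _) (h₂Q _ _))
  intro x y hxy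
  exact hKQ x y (hJleast K hKts (fun a b h => Relation.ReflTransGen.single (Or.inl h))
    (fun a b h => Relation.ReflTransGen.single (Or.inr h)) x y hxy)
end

section
/- Let Q be a wide decomposable subcategory of a finite lattice P, and let T_max be the largest transfer system on P contained in Q (the join of all transfer systems contained in Q). Then T_max is saturated: if x ≤ y ≤ z and (x,z) ∈ T_max, then (y,z) ∈ T_max. -/
variable {P : Type*}

/-- If `Q` is a wide decomposable subcategory of a finite lattice and `Tmax`
is the largest transfer system contained in `Q`, then `Tmax` is saturated. -/
theorem tmax_saturated [Lattice P] [Fintype P]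
    (Q Tmax : P → P → Prop) (hQw : IsWide Q) (hQd : IsDecomposable Q)
    (hT : IsTransferSystem Tmax) (hTQ : ∀ x y, Tmax x y → Q x y)
    (hmax : ∀ T : P → P → Prop, IsTransferSystem T → (∀ x y, T x y → Q x y) →
      ∀ x y, T x y → Tmax x y) :
    ∀ x y z : P, x ≤ y → y ≤ z → Tmax x z → Tmax y z := by
  intro x y z hxy hyz hxz
  obtain ⟨hrefl, htrans, hanti, hle, hpull⟩ := hT
  -- base relation: Tmax together with all pullbacks of (y, z)
  set B : P → P → Prop := fun a b => Tmax a b ∨ (b ≤ z ∧ a = y ⊓ b) with hBdef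
  have hBle : ∀ a b, B a b → a ≤ b := by
    rintro a b (h | ⟨hbz, rfl⟩)
    · exact hle a b h
    · exact inf_le_right
  have hBpull : ∀ a b c, B a b → c ≤ b → B (a ⊓ c) c := by
    rintro a b c (h | ⟨hbz, rfl⟩) hcb
    · exact Or.inl (hpull a b c h hcb)
    · refine Or.inr ⟨hcb.trans hbz, ?_⟩
      rw [inf_assoc, inf_eq_right.mpr hcb]
  set T : P → P → Prop := Relation.TransGen B with hTdef
  have hTle : ∀ a b, T a b → a ≤ b := by
    intro a b h
    induction h with
    | single h => exact hBle _ _ h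
    | tail _ h ih => exact ih.trans (hBle _ _ h)
  have hTpull : ∀ a b, T a b → ∀ c, c ≤ b → T (a ⊓ c) c := by
    intro a b h
    induction h with
    | single h => exact fun c hc => Relation.TransGen.single (hBpull _ _ _ h hc)
    | @tail b b' hab h ih =>
        intro c hc
        have h1 : T (a ⊓ (b ⊓ c)) (b ⊓ c) := ih (b ⊓ c) inf_le_left
        have h2 : B (b ⊓ c) c := hBpull _ _ _ h hc
        have : a ⊓ (b ⊓ c) = a ⊓ c := by
          rw [← inf_assoc, inf_eq_left.mpr (hTle a b hab)]
        rw [this] at h1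
        exact h1.tail h2
  have hTQ' : ∀ a b, T a b → Q a b := by
    intro a b h
    induction h with
    | @single b h =>
        rcases h with h | ⟨hbz, rfl⟩
        · exact hTQ _ _ h
        · have h1 : Tmax (x ⊓ b) b := hpull x z b hxz hbz
          have h2 : Q (x ⊓ b) b := hTQ _ _ h1
          exact (hQd (x ⊓ b) (y ⊓ b) b (inf_le_inf_right b hxy) inf_le_right h2).2
    | @tail b c _ h ih =>
        rcases h with h | ⟨hbz, rfl⟩
        · exact hQw.2.2 _ _ _ ih (hTQ _ _ h)
        · have h1 : Tmax (x ⊓ _) _ := hpull x z _ hxz hbz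
          have h2 := hTQ _ _ h1
          exact hQw.2.2 _ _ _ ih
            (hQd _ _ _ (inf_le_inf_right _ hxy) inf_le_right h2).2
  have hTS : IsTransferSystem T := by
    refine ⟨fun a => Relation.TransGen.single (Or.inl (hrefl a)),
      fun a b c hab hbc => hab.trans hbc,
      fun a b hab hba => le_antisymm (hTle a b hab) (hTle b a hba),
      hTle, fun a b c hab hcb => hTpull a b hab c hcb⟩
  have hyzT : T y z :=
    Relation.TransGen.single (Or.inr ⟨le_refl z, (inf_eq_left.mpr hyz).symm⟩)
  exact hmax T hTS hTQ' y z hyzT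
end

section
/- Let Q be a wide decomposable subcategory of a finite lattice P, and let K_max be the largest cotransfer system on P contained in Q. Then K_max is saturated: if x ≤ y ≤ z and (x,z) ∈ K_max, then (x,y) ∈ K_max. -/
variable {P : Type*}

/-- If `Q` is a wide decomposable subcategory of a finite lattice and `Kmax`
is the largest cotransfer system contained in `Q`, then `Kmax` is saturated. -/
theorem kmax_saturated [Lattice P] [Fintype P]
    (Q Kmax : P → P → Prop) (hQw : IsWide Q) (hQd : IsDecomposable Q)
    (hK : IsCotransferSystem Kmax) (hKQ : ∀ x y, Kmax x y → Q x y)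
    (hmax : ∀ K : P → P → Prop, IsCotransferSystem K → (∀ x y, K x y → Q x y) →
      ∀ x y, K x y → Kmax x y) :
    ∀ x y z : P, x ≤ y → y ≤ z → Kmax x z → Kmax x y := by
  obtain ⟨hrefl, htrans, hanti, hle, hpush⟩ := hK
  set K' : P → P → Prop := fun x y => x ≤ y ∧ ∃ z, y ≤ z ∧ Kmax x z with hK'
  have hK'c : IsCotransferSystem K' := by
    refine ⟨fun x => ⟨le_refl x, x, le_refl x, hrefl x⟩, ?_, ?_, fun x y h => h.1, ?_⟩
    · rintro x y z ⟨hxy, z1, hyz1, hxz1⟩ ⟨hyz, z2, hzz2, hyz2⟩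
      refine ⟨hxy.trans hyz, z2 ⊔ z1, le_sup_left.trans' hzz2, ?_⟩
      exact htrans _ _ _ hxz1 (hpush _ _ _ hyz2 hyz1)
    · rintro x y ⟨hxy, _⟩ ⟨hyx, _⟩
      exact le_antisymm hxy hyx
    · rintro x y c ⟨hxy, z, hyz, hxz⟩ hxc
      exact ⟨le_sup_right, z ⊔ c, sup_le_sup_right hyz c, hpush _ _ _ hxz hxc⟩
  have hK'Q : ∀ x y, K' x y → Q x y := by
    rintro x y ⟨hxy, z, hyz, hxz⟩
    exact (hQd x y z hxy hyz (hKQ _ _ hxz)).1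
  intro x y z hxy hyz hxz
  exact hmax K' hK'c hK'Q x y ⟨hxy, z, hyz, hxz⟩
end

section
/- Let T be a transfer system on a finite lattice P. Then the left lifting class ᵇT equals the complement of the downward extension of T: ᵇT = { (z,y) : z ≤ y and there is no x with z ≤ x < y and (x,y) ∈ T }. -/
variable {P : Type*}

/-- The left lifting class of a transfer system `T` is the complement of the
downward extension of `T`. -/
theorem llp_eq_compl_downwardExtension [Lattice P] [Fintype P]
    (T : P → P → Prop) (hT : IsTransferSystem T) :
    ∀ z y : P, LLP T z y ↔ (z ≤ y ∧ ¬ ∃ x, z ≤ x ∧ x < y ∧ T x y) := by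
  obtain ⟨-, -, -, hle, hres⟩ := hT
  intro z y
  constructor
  · rintro ⟨hzy, hlift⟩
    refine ⟨hzy, ?_⟩
    rintro ⟨x, hzx, hxy, hTxy⟩
    exact absurd (hlift x y hTxy hzx le_rfl) (not_le_of_gt hxy)
  · rintro ⟨hzy, hno⟩
    refine ⟨hzy, ?_⟩
    intro x' y' hT' hzx' hyy'
    have hTy : T (x' ⊓ y) y := hres x' y' y hT' hyy'
    have hzx : z ≤ x' ⊓ y := le_inf hzx' hzy
    rcases lt_or_eq_of_le (inf_le_right : x' ⊓ y ≤ y) with hlt | heq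
    · exact absurd ⟨x' ⊓ y, hzx, hlt, hTy⟩ hno
    · exact heq ▸ inf_le_left
end

section
/- Let K be a cotransfer system on a finite lattice P. Then the right lifting class Kᵇ equals the complement of the upward extension of K: Kᵇ = { (z,y) : z ≤ y and there is no x with z < x ≤ y and (z,x) ∈ K }. -/
variable {P : Type*}

/-- The right lifting class of a cotransfer system `K` is the complement of the
upward extension of `K`. -/
theorem rlp_eq_compl_upwardExtension [Lattice P] [Fintype P]
    (K : P → P → Prop) (hK : IsCotransferSystem K) :
    ∀ z y : P, RLP K z y ↔ (z ≤ y ∧ ¬ ∃ x, z < x ∧ x ≤ y ∧ K z x) := by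
  obtain ⟨_, _, _, hle, hpush⟩ := hK
  intro z y
  constructor
  · rintro ⟨hzy, h⟩
    refine ⟨hzy, ?_⟩
    rintro ⟨x, hzx, hxy, hK⟩
    exact absurd (h z x hK le_rfl hxy) (not_le_of_gt hzx)
  · rintro ⟨hzy, h⟩
    refine ⟨hzy, fun a b hab haz hby => ?_⟩
    have hK' := hpush a b z hab haz
    by_contra hbz
    exact h ⟨b ⊔ z, lt_of_le_of_ne le_sup_right (fun e => hbz (le_sup_left.trans e.symm.le)),
      sup_le hby hzy, hK'⟩
end

section
/- Let P be a finite lattice. The assignment (L,R) ↦ R gives an order-preserving bijection between weak factorization systems on P (ordered by inclusion of right sets) and transfer systems on P (ordered by inclusion), with inverse T ↦ (ᵇT, T). -/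
variable {P : Type*}

/-- The assignment `(L, R) ↦ R` is an (order-preserving) bijection between weak
factorization systems on a finite lattice and transfer systems, with inverse
`T ↦ (ᵇT, T)`. -/
theorem wfs_equiv_transferSystems [Lattice P] [Fintype P] :
    (∀ L R : P → P → Prop, IsWFS L R → IsTransferSystem R) ∧
    (∀ T : P → P → Prop, IsTransferSystem T → IsWFS (LLP T) T) ∧
    (∀ L R : P → P → Prop, IsWFS L R → ∀ a b, L a b ↔ LLP R a b) ∧
    (∀ L R L' R' : P → P → Prop, IsWFS L R → IsWFS L' R' →
      (∀ x y, R x y ↔ R' x y) → ∀ a b, L a b ↔ L' a b) := by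
  classical
  have part1 : ∀ L R : P → P → Prop, IsWFS L R → IsTransferSystem R := by
    rintro L R ⟨hfac, hL, hR⟩
    refine ⟨?_, ?_, ?_, ?_, ?_⟩
    · intro x; exact (hR x x).2 ⟨le_refl x, fun a b _ _ hbx => hbx⟩
    · intro x y z hxy hyz
      have hxy' := (hR x y).1 hxy
      have hyz' := (hR y z).1 hyz
      exact (hR x z).2 ⟨hxy'.1.trans hyz'.1, fun a b hab hax hbz =>
        hxy'.2 a b hab hax (hyz'.2 a b hab (hax.trans hxy'.1) hbz)⟩
    · intro x y h1 h2; exact le_antisymm ((hR x y).1 h1).1 ((hR y x).1 h2).1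
    · intro x y h; exact ((hR x y).1 h).1
    · intro x y z hxy hzy
      refine (hR (x ⊓ z) z).2 ⟨inf_le_right, fun a b hab ha hb => ?_⟩
      have hL' := (hL a b).1 hab
      exact le_inf (hL'.2 x y hxy (ha.trans inf_le_left) (hb.trans hzy)) hb
  have part2 : ∀ T : P → P → Prop, IsTransferSystem T → IsWFS (LLP T) T := by
    rintro T ⟨hrefl, htrans, hanti, hle, hpb⟩
    have hfac : ∀ x y : P, x ≤ y → ∃ z, LLP T x z ∧ T z y := by
      intro x y hxy
      set s : Finset P := Finset.univ.filter (fun w => x ≤ w ∧ T w y) with hs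
      have hmem : ∀ w, w ∈ s ↔ x ≤ w ∧ T w y := by
        intro w; simp [hs]
      have hne : s.Nonempty := ⟨y, (hmem y).2 ⟨hxy, hrefl y⟩⟩
      set z := s.inf' hne id with hz
      have hclosed : ∀ u ∈ {w | x ≤ w ∧ T w y}, ∀ v ∈ {w | x ≤ w ∧ T w y},
          u ⊓ v ∈ {w | x ≤ w ∧ T w y} := by
        intro u hu v hv
        obtain ⟨hxu, hu⟩ := hu
        obtain ⟨hxv, hv⟩ := hv
        exact ⟨le_inf hxu hxv, htrans _ _ _ (hpb u y v hu (hle _ _ hv)) hv⟩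
      have hzmem : x ≤ z ∧ T z y := by
        have := Finset.inf'_mem {w | x ≤ w ∧ T w y} hclosed s hne id
          (fun i hi => (hmem i).1 hi)
        exact this
      refine ⟨z, ⟨hzmem.1, ?_⟩, hzmem.2⟩
      intro u v huv hxu hzv
      have h1 : T (u ⊓ z) z := hpb u v z huv hzv
      have h2 : T (u ⊓ z) y := htrans _ _ _ h1 hzmem.2
      have h3 : u ⊓ z ∈ s := (hmem _).2 ⟨le_inf hxu hzmem.1, h2⟩
      exact (Finset.inf'_le id h3).trans inf_le_left
    refine ⟨hfac, fun a b => Iff.rfl, ?_⟩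
    intro x y
    constructor
    · intro h
      exact ⟨hle _ _ h, fun a b hab ha hb => hab.2 x y h ha hb⟩
    · rintro ⟨hxy, hlift⟩
      obtain ⟨z, hLxz, hTzy⟩ := hfac x y hxy
      have hzx : z ≤ x := hlift x z hLxz le_rfl (hle _ _ hTzy)
      exact (le_antisymm hzx hLxz.1) ▸ hTzy
  refine ⟨part1, part2, fun L R h => h.2.1, ?_⟩
  intro L R L' R' h h' heq a b
  rw [h.2.1, h'.2.1]
  constructor <;> rintro ⟨hab, hlift⟩
  · exact ⟨hab, fun x y hxy => hlift x y ((heq x y).2 hxy)⟩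
  · exact ⟨hab, fun x y hxy => hlift x y ((heq x y).1 hxy)⟩
end

section
/- Let P be a finite lattice and let W be the class of weak equivalences of a model structure on P. Then W is decomposable: if f = h ∘ g is in W, then both h and g are in W. Equivalently, if x ≤ y ≤ z and (x,z) ∈ W, then (x,y) ∈ W and (y,z) ∈ W. -/
variable {P : Type*}

/-- The class of weak equivalences of a model structure on a finite lattice is
decomposable. -/
theorem weakEquivalences_decomposable [Lattice P] [Fintype P]
    (AC F C AF : P → P → Prop) (h : IsModel AC F C AF)
    (W : P → P → Prop) (hW : ∀ x y, W x y ↔ Comp AF AC x y) :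
    ∀ x y z : P, x ≤ y → y ≤ z → W x z → W x y ∧ W y z := by
  obtain ⟨⟨facAC, hACiff, hFiff⟩, ⟨facC, hCiff, hAFiff⟩, hsub, h23⟩ := h
  have hACid : ∀ x, AC x x := fun x => (hACiff x x).mpr ⟨le_refl x, fun _ _ _ hx _ => hx⟩
  have hAFid : ∀ x, AF x x := fun x => (hAFiff x x).mpr ⟨le_refl x, fun _ _ _ _ hb => hb⟩
  have hACle : ∀ a b, AC a b → a ≤ b := fun a b hab => ((hACiff a b).mp hab).1
  have hAFle : ∀ a b, AF a b → a ≤ b := fun a b hab => ((hAFiff a b).mp hab).1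
  have hWAC : ∀ a b, AC a b → W a b := fun a b hab => (hW a b).mpr ⟨b, hab, hAFid b⟩
  have hWAF : ∀ a b, AF a b → W a b := fun a b hab => (hW a b).mpr ⟨a, hACid a, hab⟩
  have hpush : ∀ a b c, AC a b → a ≤ c → AC c (b ⊔ c) := by
    intro a b c hab hac
    rcases (hACiff a b).mp hab with ⟨hle, hlift⟩
    refine (hACiff c (b ⊔ c)).mpr ⟨le_sup_right, fun x y hxy hcx hby => ?_⟩
    exact sup_le (hlift x y hxy (hac.trans hcx) (le_sup_left.trans hby)) hcx
  have hpull : ∀ b c d, AF b d → c ≤ d → AF (b ⊓ c) c := by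
    intro b c d hbd hcd
    rcases (hAFiff b d).mp hbd with ⟨hle, hlift⟩
    refine (hAFiff (b ⊓ c) c).mpr ⟨inf_le_right, fun a b' hab' ha hb' => ?_⟩
    exact le_inf (hlift a b' hab' (ha.trans inf_le_left) (hb'.trans hcd)) hb'
  have h23W : TwoOutOfThree W := by
    intro x y z hxy hyz
    have h3 := h23 x y z hxy hyz
    refine ⟨fun h1 h2 => (hW x z).mpr (h3.1 ((hW x y).mp h1) ((hW y z).mp h2)),
      fun h1 h2 => (hW y z).mpr (h3.2.1 ((hW x y).mp h1) ((hW x z).mp h2)),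
      fun h1 h2 => (hW x y).mpr (h3.2.2 ((hW y z).mp h1) ((hW x z).mp h2))⟩
  intro x y z hxy hyz hxz
  obtain ⟨m, hxm, hmz⟩ := (hW x z).mp hxz
  set n := m ⊓ y with hn
  have hxn : x ≤ n := le_inf (hACle _ _ hxm) hxy
  have hnm : n ≤ m := inf_le_left
  have hACnm : AC n m := by
    have := hpush x m n hxm hxn
    rwa [sup_eq_left.mpr hnm] at this
  have hAFny : AF n y := hpull m y z hmz hyz
  have hWxn : W x n := (h23W x n m hxn hnm).2.2 (hWAC _ _ hACnm) (hWAC _ _ hxm)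
  have hWxy : W x y := (h23W x n y hxn (hAFle _ _ hAFny)).1 hWxn (hWAF _ _ hAFny)
  exact ⟨hWxy, (h23W x y z hxy hyz).2.1 hWxy hxz⟩
end

section
/- Let P be a finite lattice, W ⊆ P a wide decomposable subcategory, T ⊆ W a transfer system. Setting AF = T, C = ᵇT, AC = C ∩ W, then W = AF ∘ AC, i.e., every morphism (x,z) ∈ W factors as (x,y) ∈ AC followed by (y,z) ∈ AF, and conversely every such composite lies in W. -/
variable {P : Type*}

/-- Let `W` be a wide decomposable subcategory and `T ⊆ W` a transfer system.
Setting `AF = T`, `C = ᵇT`, `AC = C ∩ W`, we have `W = AF ∘ AC`. -/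
theorem w_eq_af_comp_ac [Lattice P] [Fintype P]
    (W T : P → P → Prop) (hWw : IsWide W) (hWd : IsDecomposable W)
    (hT : IsTransferSystem T) (hTW : ∀ x y, T x y → W x y) :
    ∀ x z : P, W x z ↔ ∃ y, (LLP T x y ∧ W x y) ∧ T y z := by
  classical
  obtain ⟨Trefl, Ttrans, _, Tle, Tpb⟩ := hT
  obtain ⟨_, Wle, Wtrans⟩ := hWw
  intro x z
  constructor
  · intro hxz
    set S : Finset P := Finset.univ.filter (fun w => x ≤ w ∧ T w z) with hS
    have hzS : z ∈ S := by
      simp [hS, Wle _ _ hxz, Trefl z]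
    have hne : S.Nonempty := ⟨z, hzS⟩
    set y : P := S.inf' hne id with hy
    have hmemS : ∀ w, w ∈ S ↔ x ≤ w ∧ T w z := by intro w; simp [hS]
    -- S is closed under meets
    have hclosed : ∀ a ∈ S, ∀ b ∈ S, a ⊓ b ∈ S := by
      intro a ha b hb
      rw [hmemS] at ha hb ⊢
      exact ⟨le_inf ha.1 hb.1,
        Ttrans _ _ _ (Tpb _ _ _ ha.2 (Tle _ _ hb.2)) hb.2⟩
    have hyS : y ∈ S := by
      apply Finset.inf'_mem (↑S : Set P)
      · intro a ha b hb; exact hclosed a ha b hb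
      · intro i hi; exact hi
    rw [hmemS] at hyS
    refine ⟨y, ⟨⟨hyS.1, ?_⟩, (hWd x y z hyS.1 (Tle _ _ hyS.2) hxz).1⟩, hyS.2⟩
    intro u v hTuv hxu hyv
    have huy : u ⊓ y ∈ S := by
      rw [hmemS]
      exact ⟨le_inf hxu hyS.1, Ttrans _ _ _ (Tpb _ _ _ hTuv hyv) hyS.2⟩
    have : y ≤ u ⊓ y := Finset.inf'_le id huy
    exact this.trans inf_le_left
  · rintro ⟨y, ⟨⟨hxy, _⟩, hWxy⟩, hTyz⟩
    exact Wtrans _ _ _ hWxy (hTW _ _ hTyz)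
end

section
/- Let P be a finite lattice, W a wide decomposable subcategory, and T ⊆ W a transfer system. There exists a model structure on P with weak equivalences W and acyclic fibrations T if and only if ᵇT ∩ W is a cotransfer system on P (i.e., closed under pushouts). -/
variable {P : Type*}

/-!
On a finite lattice, a transfer system `T` is the right class of the weak factorization system
`(ᵇT, T)`: factor `x ≤ y` through the least `z ≥ x` with `z → y` in `T`, which lifts against `T`
because `T` is closed under restriction. Dually a cotransfer system `R` is the left class of
`(R, Rᵇ)`. In a model structure with acyclic fibrations `T`, the acyclic cofibrations are exactly
`ᵇT ∩ W`, and being a left lifting class they are closed under pushouts. Conversely, if `ᵇT ∩ W`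
is a cotransfer system it yields the acyclic cofibrations of a model structure; its weak
equivalences are `T ∘ (ᵇT ∩ W) = W`, which satisfy two-out-of-three because `W` is wide and
decomposable.
-/

section Lattice
variable [Lattice P]

namespace LLP

lemma refl (S : P → P → Prop) (x : P) : LLP S x x :=
  ⟨le_rfl, fun _ _ _ hx _ => hx⟩

lemma trans {S : P → P → Prop} {x y z : P} (hxy : LLP S x y) (hyz : LLP S y z) : LLP S x z :=
  ⟨hxy.1.trans hyz.1, fun a b hab hxa hzb =>
    hyz.2 a b hab (hxy.2 a b hab hxa (hyz.1.trans hzb)) hzb⟩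

lemma pushout {S : P → P → Prop} {a b c : P} (h : LLP S a b) (hac : a ≤ c) :
    LLP S c (b ⊔ c) :=
  ⟨le_sup_right, fun x y hxy hcx hby =>
    sup_le (h.2 x y hxy (hac.trans hcx) (le_sup_left.trans hby)) hcx⟩

end LLP

lemma RLP.refl (S : P → P → Prop) (x : P) : RLP S x x :=
  ⟨le_rfl, fun _ _ _ _ hb => hb⟩

lemma isCotransferSystem_llp (S : P → P → Prop) : IsCotransferSystem (LLP S) :=
  ⟨LLP.refl S, fun _ _ _ => LLP.trans, fun _ _ hxy hyx => le_antisymm hxy.1 hyx.1,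
    fun _ _ h => h.1, fun _ _ _ => LLP.pushout⟩

namespace IsWFS

variable {L R : P → P → Prop}

lemma le_of_left (h : IsWFS L R) {a b : P} (hab : L a b) : a ≤ b :=
  ((h.2.1 a b).1 hab).1

lemma le_of_right (h : IsWFS L R) {x y : P} (hxy : R x y) : x ≤ y :=
  ((h.2.2 x y).1 hxy).1

lemma right_refl (h : IsWFS L R) (x : P) : R x x :=
  (h.2.2 x x).2 (RLP.refl L x)

lemma lift (h : IsWFS L R) {a b x y : P} (hab : L a b) (hxy : R x y)
    (hax : a ≤ x) (hby : b ≤ y) : b ≤ x :=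
  ((h.2.2 x y).1 hxy).2 a b hab hax hby

end IsWFS

lemma isWFS_llp_of_factor {T : P → P → Prop} (hle : ∀ x y, T x y → x ≤ y)
    (hfac : ∀ x y : P, x ≤ y → ∃ z, LLP T x z ∧ T z y) : IsWFS (LLP T) T := by
  refine ⟨hfac, fun _ _ => Iff.rfl, fun x y => ⟨fun hxy => ?_, fun ⟨hxy, hlift⟩ => ?_⟩⟩
  · exact ⟨hle x y hxy, fun a b hab hax hby => hab.2 x y hxy hax hby⟩
  · obtain ⟨z, hxz, hzy⟩ := hfac x y hxy
    have hzx : z ≤ x := hlift x z hxz le_rfl (hle z y hzy)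
    exact le_antisymm hzx hxz.1 ▸ hzy

lemma isWFS_rlp_of_factor {R : P → P → Prop} (hle : ∀ x y, R x y → x ≤ y)
    (hfac : ∀ x y : P, x ≤ y → ∃ z, R x z ∧ RLP R z y) : IsWFS R (RLP R) := by
  refine ⟨hfac, fun a b => ⟨fun hab => ?_, fun ⟨hab, hlift⟩ => ?_⟩, fun _ _ => Iff.rfl⟩
  · exact ⟨hle a b hab, fun x y hxy hax hby => hxy.2 a b hab hax hby⟩
  · obtain ⟨z, haz, hzb⟩ := hfac a b hab
    have hbz : b ≤ z := hlift z b hzb (hle a z haz) le_rfl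
    exact le_antisymm hzb.1 hbz ▸ haz

lemma IsModel.acyclicCofibration_iff {AC F C AF : P → P → Prop} (h : IsModel AC F C AF)
    (x y : P) : AC x y ↔ LLP AF x y ∧ Comp AF AC x y := by
  obtain ⟨hACF, hCAF, hACC, h23⟩ := h
  refine ⟨fun hxy => ⟨(hCAF.2.1 x y).1 (hACC x y hxy), y, hxy, hCAF.right_refl y⟩,
    fun ⟨hlift, hWxy⟩ => ?_⟩
  obtain ⟨z, hxz, hzy⟩ := hACF.1 x y hlift.1
  have hWxz : Comp AF AC x z := ⟨z, hxz, hCAF.right_refl z⟩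
  obtain ⟨v, hzv, hvy⟩ :=
    (h23 x z y (hACF.le_of_left hxz) (hACF.le_of_right hzy)).2.1 hWxz hWxy
  -- `z → y` is a fibration and a weak equivalence, hence an acyclic fibration
  have hvz : v = z := le_antisymm (hACF.lift hzv hzy le_rfl (hCAF.le_of_right hvy))
    (hACF.le_of_left hzv)
  have hyz : y ≤ z := hlift.2 z y (hvz ▸ hvy) (hACF.le_of_left hxz) le_rfl
  exact le_antisymm (hACF.le_of_right hzy) hyz ▸ hxz

lemma IsWide.twoOutOfThree {W : P → P → Prop} (hW : IsWide W) (hd : IsDecomposable W) :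
    TwoOutOfThree W :=
  fun x y z hxy hyz =>
    ⟨hW.2.2 x y z, fun _ h => (hd x y z hxy hyz h).2, fun _ h => (hd x y z hxy hyz h).1⟩

variable [Finite P]

lemma IsTransferSystem.exists_factor {T : P → P → Prop} (hT : IsTransferSystem T)
    {x y : P} (hxy : x ≤ y) : ∃ z, LLP T x z ∧ T z y := by
  obtain ⟨hrefl, htrans, -, -, hres⟩ := hT
  obtain ⟨z, hz⟩ := exists_minimal_of_wellFoundedLT (fun w => x ≤ w ∧ T w y) ⟨y, hxy, hrefl y⟩
  refine ⟨z, ⟨hz.prop.1, fun a b hab hxa hzb => ?_⟩, hz.prop.2⟩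
  have hmeet : x ≤ a ⊓ z ∧ T (a ⊓ z) y :=
    ⟨le_inf hxa hz.prop.1, htrans _ _ _ (hres a b z hab hzb) hz.prop.2⟩
  exact (hz.le_of_le hmeet inf_le_right).trans inf_le_left

lemma IsCotransferSystem.exists_factor {R : P → P → Prop} (hR : IsCotransferSystem R)
    {x y : P} (hxy : x ≤ y) : ∃ z, R x z ∧ RLP R z y := by
  obtain ⟨hrefl, htrans, -, -, hpush⟩ := hR
  obtain ⟨z, hz⟩ := exists_maximal_of_wellFoundedGT (fun w => R x w ∧ w ≤ y) ⟨x, hrefl x, hxy⟩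
  refine ⟨z, hz.prop.1, hz.prop.2, fun a b hab haz hby => ?_⟩
  have hjoin : R x (b ⊔ z) ∧ b ⊔ z ≤ y :=
    ⟨htrans _ _ _ hz.prop.1 (hpush a b z hab haz), sup_le hby hz.prop.2⟩
  exact le_sup_left.trans (hz.le_of_ge hjoin le_sup_right)

lemma IsTransferSystem.isWFS {T : P → P → Prop} (hT : IsTransferSystem T) :
    IsWFS (LLP T) T :=
  isWFS_llp_of_factor hT.2.2.2.1 fun _ _ => hT.exists_factor

lemma IsCotransferSystem.isWFS {R : P → P → Prop} (hR : IsCotransferSystem R) :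
    IsWFS R (RLP R) :=
  isWFS_rlp_of_factor hR.2.2.2.1 fun _ _ => hR.exists_factor

lemma comp_llp_inf_eq {W T : P → P → Prop} (hW : IsWide W) (hd : IsDecomposable W)
    (hT : IsTransferSystem T) (hTW : ∀ x y, T x y → W x y) :
    Comp T (fun x y => LLP T x y ∧ W x y) = W := by
  funext x y
  refine propext ⟨fun ⟨z, ⟨_, hxz⟩, hzy⟩ => hW.2.2 x z y hxz (hTW z y hzy), fun hxy => ?_⟩
  obtain ⟨z, hxz, hzy⟩ := hT.exists_factor (hW.2.1 x y hxy)
  exact ⟨z, ⟨hxz, (hd x z y hxz.1 (hT.2.2.2.1 z y hzy) hxy).1⟩, hzy⟩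

end Lattice

/-- There is a model structure with weak equivalences `W` and acyclic
fibrations `T` if and only if `ᵇT ∩ W` is a cotransfer system. -/
theorem exists_model_iff_cotransfer [Lattice P] [Fintype P]
    (W T : P → P → Prop) (hWw : IsWide W) (hWd : IsDecomposable W)
    (hT : IsTransferSystem T) (hTW : ∀ x y, T x y → W x y) :
    (∃ AC F C, IsModel AC F C T ∧ ∀ x y, Comp T AC x y ↔ W x y) ↔
      IsCotransferSystem (fun x y => LLP T x y ∧ W x y) := by
  constructor
  · rintro ⟨AC, F, C, hM, hW⟩
    have hAC : (fun x y => LLP T x y ∧ W x y) = LLP F := by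
      funext x y
      rw [← hW, ← hM.acyclicCofibration_iff, hM.1.2.1]
    rw [hAC]
    exact isCotransferSystem_llp F
  · intro hR
    have hcomp := comp_llp_inf_eq hWw hWd hT hTW
    refine ⟨_, _, LLP T, ⟨hR.isWFS, hT.isWFS, fun _ _ h => h.1, ?_⟩, fun x y => by rw [hcomp]⟩
    rw [hcomp]
    exact hWw.twoOutOfThree hWd
end

section
/- Let W be a wide decomposable subcategory of a finite lattice P. There exists a model structure on P with weak equivalences W and acyclic fibrations equal to the trivial transfer system (identities only) if and only if W is a cotransfer system on P. -/
variable {P : Type*}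

/-- Key factorization lemma: take the largest `W`-reachable element below `y`. -/
lemma factor_max [Lattice P] [Fintype P] {W : P → P → Prop}
    (hrefl : ∀ x, W x x) (htrans : ∀ x y z, W x y → W y z → W x z)
    (hle : ∀ x y, W x y → x ≤ y)
    (hpush : ∀ x y z, W x y → x ≤ z → W z (y ⊔ z))
    {x y : P} (hxy : x ≤ y) :
    ∃ z, W x z ∧ z ≤ y ∧ ∀ w, W x w → w ≤ y → w ≤ z := by
  classical
  set s := Finset.univ.filter (fun w => W x w ∧ w ≤ y) with hs
  have hxs : x ∈ s := by simp [hs, hrefl x, hxy]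
  have hne : s.Nonempty := ⟨x, hxs⟩
  have key : W x (s.sup' hne id) ∧ s.sup' hne id ≤ y :=
    Finset.sup'_induction (p := fun w => W x w ∧ w ≤ y) hne id
      (fun a ha b hb => ⟨htrans x b (a ⊔ b) hb.1 (hpush x a b ha.1 (hle x b hb.1)),
        sup_le ha.2 hb.2⟩)
      (fun b hb => by simpa [hs] using hb)
  exact ⟨s.sup' hne id, key.1, key.2,
    fun w hw hwy => Finset.le_sup' id (by simp [hs, hw, hwy])⟩

/-- There is a model structure with weak equivalences `W` and acyclic
fibrations the trivial transfer system (identities only) if and only if `W`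
is a cotransfer system. -/
theorem exists_model_trivial_af_iff [Lattice P] [Fintype P]
    (W : P → P → Prop) (hWw : IsWide W) (hWd : IsDecomposable W) :
    (∃ AC F C, IsModel AC F C (fun x y : P => x = y) ∧
      ∀ x y, Comp (fun a b : P => a = b) AC x y ↔ W x y) ↔
    IsCotransferSystem W := by
  constructor
  · rintro ⟨AC, F, C, hM, hW⟩
    have hAC : ∀ x y, AC x y ↔ W x y := fun x y =>
      ⟨fun h => (hW x y).1 ⟨y, h, rfl⟩,
       fun h => by obtain ⟨m, h1, h2⟩ := (hW x y).2 h; exact h2 ▸ h1⟩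
    have hLLP : ∀ a b, W a b ↔ LLP F a b := fun a b =>
      (hAC a b).symm.trans (hM.1.2.1 a b)
    refine ⟨fun x => (hLLP x x).2 ⟨le_rfl, fun p q _ hp _ => hp⟩,
      fun x y z hxy hyz => (hLLP x z).2 ?_,
      fun x y h1 h2 => le_antisymm (hWw.2.1 _ _ h1) (hWw.2.1 _ _ h2),
      hWw.2.1, fun x y z hxy hxz => (hLLP z (y ⊔ z)).2 ?_⟩
    · obtain ⟨h1, H1⟩ := (hLLP x y).1 hxy
      obtain ⟨h2, H2⟩ := (hLLP y z).1 hyz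
      exact ⟨h1.trans h2, fun p q hpq hp hq =>
        H2 p q hpq (H1 p q hpq hp (h2.trans hq)) hq⟩
    · obtain ⟨h1, H1⟩ := (hLLP x y).1 hxy
      exact ⟨le_sup_right, fun p q hpq hp hq =>
        sup_le (H1 p q hpq (hxz.trans hp) (le_sup_left.trans hq)) hp⟩
  · rintro ⟨hrefl, htrans, _, hle, hpush⟩
    have fac := fun {x y : P} (h : x ≤ y) => factor_max hrefl htrans hle hpush h
    refine ⟨W, RLP W, fun a b => a ≤ b, ⟨⟨?_, ?_, fun _ _ => Iff.rfl⟩,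
      ⟨?_, ?_, ?_⟩, hle, ?_⟩, ?_⟩
    · intro x y hxy
      obtain ⟨z, hz1, hz2, hz3⟩ := fac hxy
      exact ⟨z, hz1, hz2, fun a b hab ha hb => by
        have := hz3 (b ⊔ z) (htrans x z _ hz1 (hpush a b z hab ha)) (sup_le hb hz2)
        exact le_sup_left.trans this⟩
    · intro a b
      constructor
      · intro h
        exact ⟨hle a b h, fun p q hpq hp hq => hpq.2 a b h hp hq⟩
      · rintro ⟨hab, H⟩
        obtain ⟨z, hz1, hz2, hz3⟩ := fac hab
        have hRzb : RLP W z b := ⟨hz2, fun p q hpq hp hq => by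
          have := hz3 (q ⊔ z) (htrans a z _ hz1 (hpush p q z hpq hp)) (sup_le hq hz2)
          exact le_sup_left.trans this⟩
        have hbz : b ≤ z := H z b hRzb (hle a z hz1) le_rfl
        exact le_antisymm hz2 hbz ▸ hz1
    · exact fun x y h => ⟨y, h, rfl⟩
    · intro a b
      exact ⟨fun h => ⟨h, fun p q hpq hp hq => hpq ▸ hq⟩, fun h => h.1⟩
    · intro x y
      constructor
      · rintro rfl
        exact ⟨le_rfl, fun a b hab ha hb => hb⟩
      · rintro ⟨hxy, H⟩
        exact le_antisymm hxy (H x y hxy le_rfl le_rfl)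
    · intro x y z hxy hyz
      have hc : ∀ a b : P, Comp (fun p q : P => p = q) W a b ↔ W a b := fun a b =>
        ⟨fun ⟨m, h1, h2⟩ => h2 ▸ h1, fun h => ⟨b, h, rfl⟩⟩
      simp only [hc]
      exact ⟨fun h1 h2 => htrans x y z h1 h2,
        fun h1 h2 => (hWd x y z hxy hyz h2).2,
        fun h1 h2 => (hWd x y z hxy hyz h2).1⟩
    · intro x y
      exact ⟨fun ⟨m, h1, h2⟩ => h2 ▸ h1, fun h => ⟨y, h, rfl⟩⟩
end

section
/- Let W be a weak equivalence set on a finite lattice P. If T ∈ AF(W) (i.e., T is a transfer system occurring as the acyclic fibrations of a model structure with weak equivalences W) and T' is a transfer system with T ⊆ T' ⊆ W, then T' ∈ AF(W). -/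
variable {P : Type*}

section Aux

variable [Lattice P]

lemma llp_refl (S : P → P → Prop) (x : P) : LLP S x x :=
  ⟨le_rfl, fun _ _ _ hax _ => hax⟩

lemma llp_trans (S : P → P → Prop) {a b c : P} (h1 : LLP S a b) (h2 : LLP S b c) :
    LLP S a c := by
  refine ⟨h1.1.trans h2.1, fun x y hS hax hcy => ?_⟩
  exact h2.2 x y hS (h1.2 x y hS hax (h2.1.trans hcy)) hcy

lemma llp_pushout (S : P → P → Prop) : PushoutClosed (LLP S) := by
  intro a b c hab hac
  refine ⟨le_sup_right, fun x y hS hcx hby => ?_⟩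
  exact sup_le (hab.2 x y hS (hac.trans hcx) (le_sup_left.trans hby)) hcx

lemma llp_antitone (S S' : P → P → Prop) (hSS' : ∀ x y, S x y → S' x y) {a b : P}
    (h : LLP S' a b) : LLP S a b :=
  ⟨h.1, fun x y hS => h.2 x y (hSS' x y hS)⟩

lemma mem_llp_rlp (L : P → P → Prop) {a b : P} (h : L a b) (hle : a ≤ b) :
    LLP (RLP L) a b :=
  ⟨hle, fun x y hR hax hby => hR.2 a b h hax hby⟩

/-- Factorization of a morphism into `LLP T'` followed by `T'`, for a transfer
system `T'` on a finite lattice, via the meet of all admissible midpoints. -/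
lemma fact_right [Fintype P] (T' : P → P → Prop) (hT' : IsTransferSystem T')
    {x y : P} (h : x ≤ y) : ∃ z, LLP T' x z ∧ T' z y := by
  classical
  obtain ⟨hrefl, htrans, _, hle, hpull⟩ := hT'
  set S : Set P := {w | x ≤ w ∧ T' w y} with hS
  have hySmem : y ∈ S := ⟨h, hrefl y⟩
  have ht : S.toFinset.Nonempty := ⟨y, Set.mem_toFinset.mpr hySmem⟩
  have hclosed : ∀ a ∈ S, ∀ b ∈ S, a ⊓ b ∈ S := by
    intro a ha b hb
    exact ⟨le_inf ha.1 hb.1, htrans _ b y (hpull a y b ha.2 (hle b y hb.2)) hb.2⟩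
  set z := S.toFinset.inf' ht id with hz
  have hmem : z ∈ S :=
    Finset.inf'_mem S hclosed _ ht id (fun i hi => Set.mem_toFinset.mp hi)
  have hmin : ∀ w ∈ S, z ≤ w := fun w hw =>
    Finset.inf'_le id (Set.mem_toFinset.mpr hw)
  refine ⟨z, ⟨hmem.1, fun u v huv hxu hzv => ?_⟩, hmem.2⟩
  have h1 : T' (u ⊓ z) z := hpull u v z huv hzv
  have h2 : u ⊓ z ∈ S := ⟨le_inf hxu hmem.1, htrans _ z y h1 hmem.2⟩
  exact (hmin _ h2).trans inf_le_left

/-- Factorization of a morphism into `A` followed by `RLP A`, for a class `A`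
that is reflexive, transitive, ≤-refining and pushout-closed, on a finite
lattice, via the join of all admissible midpoints. -/
lemma fact_left [Fintype P] (A : P → P → Prop) (hrefl : ∀ x, A x x)
    (hle : ∀ a b, A a b → a ≤ b) (htrans : ∀ a b c, A a b → A b c → A a c)
    (hpush : PushoutClosed A) {x y : P} (h : x ≤ y) :
    ∃ z, A x z ∧ RLP A z y := by
  classical
  set S : Set P := {w | w ≤ y ∧ A x w} with hS
  have hxSmem : x ∈ S := ⟨h, hrefl x⟩
  have ht : S.toFinset.Nonempty := ⟨x, Set.mem_toFinset.mpr hxSmem⟩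
  have hclosed : ∀ a ∈ S, ∀ b ∈ S, a ⊔ b ∈ S := by
    intro a ha b hb
    exact ⟨sup_le ha.1 hb.1, htrans x b _ hb.2 (hpush x a b ha.2 (hle x b hb.2))⟩
  set z := S.toFinset.sup' ht id with hz
  have hmem : z ∈ S :=
    Finset.sup'_mem S hclosed _ ht id (fun i hi => Set.mem_toFinset.mp hi)
  have hmax : ∀ w ∈ S, w ≤ z := fun w hw =>
    Finset.le_sup' id (Set.mem_toFinset.mpr hw)
  refine ⟨z, hmem.2, hmem.1, fun a b hab haz hby => ?_⟩
  have h1 : A z (b ⊔ z) := hpush a b z hab haz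
  have h2 : b ⊔ z ∈ S := ⟨sup_le hby hmem.1, htrans x z _ hmem.2 h1⟩
  exact le_sup_left.trans (hmax _ h2)

end Aux

/-- If `T ∈ AF(W)` and `T'` is a transfer system with `T ⊆ T' ⊆ W`, then
`T' ∈ AF(W)`. -/
theorem occursAsAF_of_subset [Lattice P] [Fintype P]
    (W T T' : P → P → Prop)
    (h : OccursAsAF W T) (hT' : IsTransferSystem T')
    (hTT' : ∀ x y, T x y → T' x y) (hT'W : ∀ x y, T' x y → W x y) :
    OccursAsAF W T' := by
  obtain ⟨AC, F, C, ⟨⟨hfac1, hACiff, hFiff⟩, ⟨hfac2, hCiff, hTiff⟩, hACC, h23⟩, hW⟩ := h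
  obtain ⟨hT'refl, hT'trans, _, hT'le, hT'pull⟩ := hT'
  -- basic facts about the given model structure
  have hTrefl : ∀ x, T x x := fun x =>
    (hTiff x x).mpr ⟨le_rfl, fun _ _ _ _ hbx => hbx⟩
  have hTle : ∀ x y, T x y → x ≤ y := fun x y hxy => ((hTiff x y).mp hxy).1
  have hACle : ∀ a b, AC a b → a ≤ b := fun a b hab => ((hACiff a b).mp hab).1
  have hACW : ∀ x y, AC x y → W x y := fun x y hxy =>
    (hW x y).mp ⟨y, hxy, hTrefl y⟩
  have hWle : ∀ x y, W x y → x ≤ y := by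
    intro x y hxy
    obtain ⟨z, h1, h2⟩ := (hW x y).mpr hxy
    exact (hACle x z h1).trans (hTle z y h2)
  have hACpush : PushoutClosed AC := by
    intro a b c hab hac
    exact (hACiff c (b ⊔ c)).mpr (llp_pushout F a b c ((hACiff a b).mp hab) hac)
  have hLLPTW_AC : ∀ x y, LLP T x y → W x y → AC x y := by
    intro x y hl hw
    obtain ⟨m, hACm, hTm⟩ := (hW x y).mpr hw
    have hym : y ≤ m := hl.2 m y hTm (hACle x m hACm) le_rfl
    have : m = y := le_antisymm (hTle m y hTm) hym
    exact this ▸ hACm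
  have hW23 : TwoOutOfThree W := by
    intro x y z hxy hyz
    have := h23 x y z hxy hyz
    simpa only [hW] using this
  -- the new classes
  set AC' : P → P → Prop := fun a b => LLP T' a b ∧ W a b with hAC'
  have hAC'refl : ∀ x, AC' x x := fun x =>
    ⟨llp_refl T' x, hACW x x ((hACiff x x).mpr (llp_refl F x))⟩
  have hAC'le : ∀ a b, AC' a b → a ≤ b := fun a b hab => hab.1.1
  have hAC'trans : ∀ a b c, AC' a b → AC' b c → AC' a c := by
    intro a b c h1 h2
    exact ⟨llp_trans T' h1.1 h2.1,
      (hW23 a b c (hAC'le a b h1) (hAC'le b c h2)).1 h1.2 h2.2⟩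
  have hAC'push : PushoutClosed AC' := by
    intro a b c hab hac
    refine ⟨llp_pushout T' a b c hab.1 hac, ?_⟩
    have hAC : AC a b :=
      hLLPTW_AC a b (llp_antitone T T' hTT' hab.1) hab.2
    exact hACW c (b ⊔ c) (hACpush a b c hAC hac)
  set F' : P → P → Prop := fun x y => RLP AC' x y with hF'
  set C' : P → P → Prop := fun a b => LLP T' a b with hC'
  -- the WFS (AC', F')
  have hWFS1 : IsWFS AC' F' := by
    refine ⟨fun x y hxy => fact_left AC' hAC'refl hAC'le hAC'trans hAC'push hxy,
      fun a b => ⟨fun hab => mem_llp_rlp AC' hab (hAC'le a b hab), ?_⟩,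
      fun x y => Iff.rfl⟩
    intro hab
    obtain ⟨z, h1, h2⟩ :=
      fact_left AC' hAC'refl hAC'le hAC'trans hAC'push hab.1
    have hbz : b ≤ z := hab.2 z b h2 (hAC'le a z h1) le_rfl
    have : z = b := le_antisymm h2.1 hbz
    exact this ▸ h1
  -- the WFS (C', T')
  have hT'full : IsTransferSystem T' :=
    ⟨hT'refl, hT'trans, fun x y h1 h2 => le_antisymm (hT'le x y h1) (hT'le y x h2),
      hT'le, hT'pull⟩
  have hWFS2 : IsWFS C' T' := by
    refine ⟨fun x y hxy => fact_right T' hT'full hxy, fun a b => Iff.rfl,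
      fun x y => ⟨fun hxy => ⟨hT'le x y hxy, fun a b hab hax hby => hab.2 x y hxy hax hby⟩, ?_⟩⟩
    intro hxy
    obtain ⟨z, h1, h2⟩ := fact_right T' hT'full hxy.1
    have hzx : z ≤ x := hxy.2 x z h1 le_rfl (hT'le z y h2)
    have : z = x := le_antisymm hzx h1.1
    exact this ▸ h2
  -- the weak equivalences agree
  have hCompW : ∀ x y, Comp T' AC' x y ↔ W x y := by
    intro x y
    constructor
    · rintro ⟨z, hz1, hz2⟩
      exact (hW23 x z y (hAC'le x z hz1) (hT'le z y hz2)).1 hz1.2 (hT'W z y hz2)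
    · intro hxy
      obtain ⟨z, h1, h2⟩ := fact_right T' hT'full (hWle x y hxy)
      have hWxz : W x z :=
        (hW23 x z y h1.1 (hT'le z y h2)).2.2 (hT'W z y h2) hxy
      exact ⟨z, ⟨h1, hWxz⟩, h2⟩
  have h23' : TwoOutOfThree (Comp T' AC') := by
    intro x y z hxy hyz
    simpa only [hCompW] using hW23 x y z hxy hyz
  exact ⟨AC', F', C', ⟨hWFS1, hWFS2, fun x y hxy => hxy.1, h23'⟩, hCompW⟩
end

section
/- Let W be a weak equivalence set on a finite lattice P. Then AF_max, the maximum transfer system occurring as acyclic fibrations of a model structure with weak equivalences W, equals T_max, the maximum transfer system contained in W. -/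
variable {P : Type*}

section Aux

lemma exists_min_closed [Lattice P] [Fintype P] (S : Set P)
    (hS : S.Nonempty) (hcl : ∀ a ∈ S, ∀ b ∈ S, a ⊓ b ∈ S) :
    ∃ z ∈ S, ∀ w ∈ S, z ≤ w := by
  classical
  obtain ⟨a, ha⟩ := hS
  have ht : (Finset.univ.filter (· ∈ S)).Nonempty := ⟨a, by simpa using ha⟩
  refine ⟨(Finset.univ.filter (· ∈ S)).inf' ht id, ?_, ?_⟩
  · exact Finset.inf'_mem S hcl _ ht id (fun x hx => by simpa using hx)
  · intro w hw
    exact Finset.inf'_le id (by simpa using hw)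

lemma exists_max_closed [Lattice P] [Fintype P] (S : Set P)
    (hS : S.Nonempty) (hcl : ∀ a ∈ S, ∀ b ∈ S, a ⊔ b ∈ S) :
    ∃ z ∈ S, ∀ w ∈ S, w ≤ z := by
  classical
  obtain ⟨a, ha⟩ := hS
  have ht : (Finset.univ.filter (· ∈ S)).Nonempty := ⟨a, by simpa using ha⟩
  refine ⟨(Finset.univ.filter (· ∈ S)).sup' ht id, ?_, ?_⟩
  · exact Finset.sup'_mem S hcl _ ht id (fun x hx => by simpa using hx)
  · intro w hw
    exact Finset.le_sup' id (by simpa using hw)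

/-- Any class occurring as acyclic fibrations of a model structure with weak
equivalences `W` is a transfer system contained in `W`. -/
lemma occursAsAF_props [Lattice P] (W T : P → P → Prop) (h : OccursAsAF W T) :
    IsTransferSystem T ∧ ∀ x y, T x y → W x y := by
  obtain ⟨AC, F, C, ⟨⟨hACfac, hACiff, hFiff⟩, ⟨hCfac, hCiff, hTiff⟩, hACC, h23⟩, hWiff⟩ := h
  have hTle : ∀ x y, T x y → x ≤ y := fun x y hxy => ((hTiff x y).mp hxy).1
  have hTrefl : ∀ x, T x x := fun x => (hTiff x x).mpr ⟨le_rfl, fun a b _ _ hbx => hbx⟩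
  have hACrefl : ∀ x, AC x x := fun x => (hACiff x x).mpr ⟨le_rfl, fun u v _ hxu _ => hxu⟩
  have hTW : ∀ x y, T x y → W x y := fun x y hxy => (hWiff x y).mp ⟨x, hACrefl x, hxy⟩
  refine ⟨⟨hTrefl, ?_, fun x y h1 h2 => le_antisymm (hTle _ _ h1) (hTle _ _ h2), hTle, ?_⟩, hTW⟩
  · intro x y z hxy hyz
    obtain ⟨hx, Hxy⟩ := (hTiff x y).mp hxy
    obtain ⟨hy, Hyz⟩ := (hTiff y z).mp hyz
    exact (hTiff x z).mpr ⟨hx.trans hy, fun a b hC hax hbz =>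
      Hxy a b hC hax (Hyz a b hC (hax.trans hx) hbz)⟩
  · intro x y z hxy hzy
    obtain ⟨hx, Hxy⟩ := (hTiff x y).mp hxy
    exact (hTiff (x ⊓ z) z).mpr ⟨inf_le_right, fun a b hC ha hb =>
      le_inf (Hxy a b hC (ha.trans inf_le_left) (hb.trans hzy)) hb⟩

end Aux

/-- For a weak equivalence set `W`, the maximum transfer system occurring as
acyclic fibrations equals `T_max`, the maximum transfer system contained in
`W`. -/
theorem afmax_eq_tmax [Lattice P] [Fintype P]
    (W Tmax : P → P → Prop)
    (hne : ∃ T : P → P → Prop, OccursAsAF W T)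
    (hT : IsTransferSystem Tmax) (hTW : ∀ x y, Tmax x y → W x y)
    (hmax : ∀ T : P → P → Prop, IsTransferSystem T → (∀ x y, T x y → W x y) →
      ∀ x y, T x y → Tmax x y) :
    OccursAsAF W Tmax ∧
      ∀ T : P → P → Prop, OccursAsAF W T → ∀ x y, T x y → Tmax x y := by
  have hocc : ∀ T : P → P → Prop, OccursAsAF W T → ∀ x y, T x y → Tmax x y :=
    fun T h => hmax T (occursAsAF_props W T h).1 (occursAsAF_props W T h).2
  refine ⟨?_, hocc⟩
  obtain ⟨T0, hT0occ⟩ := hne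
  have hT0occ' := hT0occ
  obtain ⟨AC, F, C, ⟨⟨hACfac, hACiff, hFiff⟩, ⟨hCfac, hCiff, hT0iff⟩, hACC, h23⟩, hWiff⟩ :=
    hT0occ
  obtain ⟨hRrefl, hRtrans, hRanti, hRle, hRpb⟩ := hT
  have hT0R : ∀ x y, T0 x y → Tmax x y := hocc T0 hT0occ'
  have hACrefl : ∀ x, AC x x := fun x => (hACiff x x).mpr ⟨le_rfl, fun u v _ hxu _ => hxu⟩
  have hT0refl : ∀ x, T0 x x := fun x => (hT0iff x x).mpr ⟨le_rfl, fun a b _ _ hbx => hbx⟩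
  have hACle : ∀ x y, AC x y → x ≤ y := fun x y h => ((hACiff x y).mp h).1
  have hT0le : ∀ x y, T0 x y → x ≤ y := fun x y h => ((hT0iff x y).mp h).1
  have hACW : ∀ x y, AC x y → W x y := fun x y h => (hWiff x y).mp ⟨y, h, hT0refl y⟩
  have hWrefl : ∀ x, W x x := fun x => hACW x x (hACrefl x)
  have hWle : ∀ x y, W x y → x ≤ y := by
    intro x y h
    obtain ⟨m, h1, h2⟩ := (hWiff x y).mpr h
    exact (hACle x m h1).trans (hT0le m y h2)
  have hW23 : TwoOutOfThree W := by
    intro x y z hxy hyz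
    have h' := h23 x y z hxy hyz
    simpa only [hWiff] using h'
  have hWtrans : ∀ x y z, W x y → W y z → W x z := fun x y z h1 h2 =>
    (hW23 x y z (hWle _ _ h1) (hWle _ _ h2)).1 h1 h2
  -- factorization into a `LLP Tmax` map followed by a `Tmax` map
  have hfacCR : ∀ x y : P, x ≤ y → ∃ z, LLP Tmax x z ∧ Tmax z y := by
    intro x y hxy
    obtain ⟨z, hzmem, hmin⟩ :=
      exists_min_closed {w | x ≤ w ∧ w ≤ y ∧ Tmax w y} ⟨y, hxy, le_rfl, hRrefl y⟩
        (by
          rintro a ⟨hxa, hay, hRa⟩ b ⟨hxb, hby2, hRb⟩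
          have h1 : Tmax (a ⊓ b) b := hRpb a y b hRa hby2
          exact ⟨le_inf hxa hxb, inf_le_right.trans hby2, hRtrans _ _ _ h1 hRb⟩)
    obtain ⟨hxz, hzy, hRzy⟩ := hzmem
    refine ⟨z, ⟨hxz, ?_⟩, hRzy⟩
    intro u v hRuv hxu hzv
    have h1 : Tmax (u ⊓ z) z := hRpb u v z hRuv hzv
    have h2 : Tmax (u ⊓ z) y := hRtrans _ _ _ h1 hRzy
    have h3 := hmin (u ⊓ z) ⟨le_inf hxu hxz, inf_le_right.trans hzy, h2⟩
    exact h3.trans inf_le_left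
  -- `(LLP Tmax, Tmax)` is a weak factorization system
  have hWFS2 : IsWFS (LLP Tmax) Tmax := by
    refine ⟨fun x y hxy => hfacCR x y hxy, fun a b => Iff.rfl, ?_⟩
    intro x y
    constructor
    · intro hR
      exact ⟨hRle x y hR, fun a b hL hax hby => hL.2 x y hR hax hby⟩
    · rintro ⟨hxy, H⟩
      obtain ⟨z, hL, hRzy⟩ := hfacCR x y hxy
      have hzx : z ≤ x := H x z hL le_rfl (hRle z y hRzy)
      have hxz : x = z := le_antisymm hL.1 hzx
      rw [hxz]; exact hRzy
  -- auxiliary facts about the new acyclic cofibrations `AC' = LLP Tmax ∩ W`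
  have hACpush : ∀ a b c, AC a b → a ≤ c → AC c (b ⊔ c) := by
    intro a b c hab hac
    obtain ⟨hab', H⟩ := (hACiff a b).mp hab
    refine (hACiff c (b ⊔ c)).mpr ⟨le_sup_right, ?_⟩
    intro u v hF hcu hv
    exact sup_le (H u v hF (hac.trans hcu) (le_sup_left.trans hv)) hcu
  have hCW_AC : ∀ a b, C a b → W a b → AC a b := by
    intro a b hC hW
    obtain ⟨m, hACam, hT0mb⟩ := (hWiff a b).mpr hW
    have hbm : b ≤ m := ((hCiff a b).mp hC).2 m b hT0mb (hACle a m hACam) le_rfl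
    have hmb : m = b := le_antisymm (hT0le m b hT0mb) hbm
    rwa [hmb] at hACam
  have hC'C : ∀ a b, LLP Tmax a b → C a b := by
    intro a b h
    exact (hCiff a b).mpr ⟨h.1, fun u v hT0uv hau hbv => h.2 u v (hT0R u v hT0uv) hau hbv⟩
  have hAC'push : ∀ a b c, (LLP Tmax a b ∧ W a b) → a ≤ c →
      LLP Tmax c (b ⊔ c) ∧ W c (b ⊔ c) := by
    intro a b c hab hac
    obtain ⟨hC', hW⟩ := hab
    constructor
    · exact ⟨le_sup_right, fun u v hR hcu hv =>
        sup_le (hC'.2 u v hR (hac.trans hcu) (le_sup_left.trans hv)) hcu⟩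
    · exact hACW c (b ⊔ c) (hACpush a b c (hCW_AC a b (hC'C a b hC') hW) hac)
  have hAC'refl : ∀ x, LLP Tmax x x ∧ W x x := fun x =>
    ⟨⟨le_rfl, fun u v _ hxu _ => hxu⟩, hWrefl x⟩
  have hAC'trans : ∀ x y z, (LLP Tmax x y ∧ W x y) → (LLP Tmax y z ∧ W y z) →
      LLP Tmax x z ∧ W x z := by
    intro x y z h1 h2
    obtain ⟨l1, w1⟩ := h1
    obtain ⟨l2, w2⟩ := h2
    refine ⟨⟨l1.1.trans l2.1, ?_⟩, hWtrans x y z w1 w2⟩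
    intro u v hR hxu hzv
    exact l2.2 u v hR (l1.2 u v hR hxu (l2.1.trans hzv)) hzv
  -- factorization into a new acyclic cofibration followed by a new fibration
  have hfacAF : ∀ x y : P, x ≤ y →
      ∃ z, (LLP Tmax x z ∧ W x z) ∧ RLP (fun a b => LLP Tmax a b ∧ W a b) z y := by
    intro x y hxy
    obtain ⟨z, hzmem, hmaxz⟩ :=
      exists_max_closed {w | w ≤ y ∧ (LLP Tmax x w ∧ W x w)} ⟨x, hxy, hAC'refl x⟩
        (by
          rintro a ⟨hay, ha⟩ b ⟨hby, hb⟩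
          refine ⟨sup_le hay hby, ?_⟩
          exact hAC'trans x b (a ⊔ b) hb (hAC'push x a b ha hb.1.1))
    obtain ⟨hzy, hACxz⟩ := hzmem
    refine ⟨z, hACxz, hzy, ?_⟩
    intro a b hab haz hby
    have h1 := hAC'push a b z hab haz
    have h2 := hAC'trans x z (b ⊔ z) hACxz h1
    have h3 := hmaxz (b ⊔ z) ⟨sup_le hby hzy, h2⟩
    exact le_sup_left.trans h3
  have hWFS1 : IsWFS (fun a b => LLP Tmax a b ∧ W a b)
      (RLP (fun a b => LLP Tmax a b ∧ W a b)) := by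
    refine ⟨hfacAF, ?_, fun x y => Iff.rfl⟩
    intro a b
    constructor
    · intro h
      exact ⟨h.1.1, fun x y hF hax hby => hF.2 a b h hax hby⟩
    · rintro ⟨hab, H⟩
      obtain ⟨z, hACxz, hFzb⟩ := hfacAF a b hab
      have hbz : b ≤ z := H z b hFzb hACxz.1.1 le_rfl
      have hzb : z = b := le_antisymm hFzb.1 hbz
      rwa [hzb] at hACxz
  have hComp : ∀ x y, Comp Tmax (fun a b => LLP Tmax a b ∧ W a b) x y ↔ W x y := by
    intro x y
    constructor
    · rintro ⟨m, ⟨_, hWxm⟩, hRmy⟩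
      exact hWtrans x m y hWxm (hTW m y hRmy)
    · intro hW
      obtain ⟨z, hLxz, hRzy⟩ := hfacCR x y (hWle x y hW)
      have hWzy := hTW z y hRzy
      have hWxz := (hW23 x z y hLxz.1 (hRle z y hRzy)).2.2 hWzy hW
      exact ⟨z, ⟨hLxz, hWxz⟩, hRzy⟩
  refine ⟨fun a b => LLP Tmax a b ∧ W a b, RLP (fun a b => LLP Tmax a b ∧ W a b), LLP Tmax,
    ⟨hWFS1, hWFS2, fun x y h => h.1, ?_⟩, hComp⟩
  intro x y z hxy hyz
  have h' := hW23 x y z hxy hyz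
  simpa only [hComp] using h'
end

section
/- Let Q be a wide decomposable subcategory of a finite lattice P satisfying: for all (x,z) ∈ Q there exists a factorization of x → z into covering relations σ₁,…,σₙ and an index 0 ≤ k ≤ n such that all pushouts of σᵢ lie in Q for i ≤ k and all pullbacks of σᵢ lie in Q for i > k. Then ᵇT_max ∩ Q is closed under pushouts, where T_max is the largest transfer system contained in Q. -/
variable {P : Type*}

/-- Condition 5.3: every morphism of `Q` factors into covering relations, an
initial segment of which has all pushouts in `Q` and the rest of which has all
pullbacks in `Q`. -/
def SatisfiesCondition [Lattice P] (Q : P → P → Prop) : Prop :=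
  ∀ x z : P, Q x z → ∃ (m : ℕ) (c : Fin (m + 1) → P) (k : ℕ), k ≤ m ∧
    c 0 = x ∧ c (Fin.last m) = z ∧
    (∀ i : Fin m, c i.castSucc ⋖ c i.succ) ∧
    (∀ i : Fin m, (i : ℕ) < k → ∀ w, c i.castSucc ≤ w → Q w (c i.succ ⊔ w)) ∧
    (∀ i : Fin m, k ≤ (i : ℕ) → ∀ w, w ≤ c i.succ → Q (c i.castSucc ⊓ w) w)

/-- If a wide decomposable subcategory `Q` satisfies Condition 5.3, then
`ᵇT_max ∩ Q` is closed under pushouts, where `T_max` is the largest transfer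
system contained in `Q`. -/
theorem llpTmax_inter_Q_pushoutClosed [Lattice P] [Fintype P]
    (Q Tmax : P → P → Prop) (hQw : IsWide Q) (hQd : IsDecomposable Q)
    (hcond : SatisfiesCondition Q)
    (hT : IsTransferSystem Tmax) (hTQ : ∀ x y, Tmax x y → Q x y)
    (hmax : ∀ T : P → P → Prop, IsTransferSystem T → (∀ x y, T x y → Q x y) →
      ∀ x y, T x y → Tmax x y) :
    PushoutClosed (fun a b => LLP Tmax a b ∧ Q a b) := by
  rintro a b c ⟨⟨hab, hlift⟩, hQab⟩ hac
  obtain ⟨hQrefl, hQle, hQtrans⟩ := hQw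
  -- The pullback-stable part of Q is a transfer system contained in Q.
  set S : P → P → Prop := fun x y => Q x y ∧ ∀ w, w ≤ y → Q (x ⊓ w) w with hSdef
  have hS : IsTransferSystem S := by
    refine ⟨?_, ?_, ?_, ?_, ?_⟩
    · intro x
      exact ⟨hQrefl x, fun w hw => by rw [inf_eq_right.2 hw]; exact hQrefl w⟩
    · rintro x y z ⟨hxy, hxyp⟩ ⟨hyz, hyzp⟩
      refine ⟨hQtrans _ _ _ hxy hyz, fun w hw => ?_⟩
      have h1 : Q (x ⊓ (y ⊓ w)) (y ⊓ w) := hxyp (y ⊓ w) inf_le_left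
      have h2 : x ⊓ (y ⊓ w) = x ⊓ w := by
        rw [← inf_assoc, inf_eq_left.2 (hQle _ _ hxy)]
      rw [h2] at h1
      exact hQtrans _ _ _ h1 (hyzp w hw)
    · intro x y h1 h2
      exact le_antisymm (hQle _ _ h1.1) (hQle _ _ h2.1)
    · intro x y h
      exact hQle _ _ h.1
    · rintro x y z ⟨hxy, hxyp⟩ hz
      refine ⟨hxyp z hz, fun w hw => ?_⟩
      have h2 : x ⊓ z ⊓ w = x ⊓ w := by
        rw [inf_assoc, inf_eq_right.2 hw]
      rw [h2]
      exact hxyp w (hw.trans hz)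
  have hSsub : ∀ x y, S x y → Tmax x y := hmax S hS (fun x y h => h.1)
  constructor
  · -- LLP part
    refine ⟨le_sup_right, fun x y hxy hcx hbcy => ?_⟩
    have hbx : b ≤ x := hlift x y hxy (hac.trans hcx) (le_sup_left.trans hbcy)
    exact sup_le hbx hcx
  · -- Q part
    obtain ⟨m, cc, k, hkm, hc0, hcm, hcov, hpush, hpull⟩ := hcond a b hQab
    have hmono : Monotone cc := Fin.monotone_iff_le_succ.2 (fun i => (hcov i).le)
    have hkm' : (⟨k, Nat.lt_succ_of_le hkm⟩ : Fin (m+1)) ≤ Fin.last m := by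
      simp [Fin.le_def, hkm]
    have hack : a ≤ cc ⟨k, Nat.lt_succ_of_le hkm⟩ := by
      rw [← hc0]; exact hmono (Fin.zero_le _)
    have hckb : cc ⟨k, Nat.lt_succ_of_le hkm⟩ ≤ b := by
      rw [← hcm]; exact hmono hkm'
    -- tail pullback composite
    have tail : ∀ t j (hj : j + t = m), k ≤ j → ∀ w, w ≤ b →
        Q (cc ⟨j, by omega⟩ ⊓ w) w := by
      intro t
      induction t with
      | zero =>
        intro j hj _ w hw
        have : (⟨j, by omega⟩ : Fin (m+1)) = Fin.last m := by
          simp [Fin.ext_iff]; omega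
        rw [this, hcm, inf_eq_right.2 hw]
        exact hQrefl w
      | succ t ih =>
        intro j hj hkj w hw
        have hjm : j < m := by omega
        have h1 : Q (cc ⟨j + 1, by omega⟩ ⊓ w) w := ih (j+1) (by omega) (by omega) w hw
        have h2 := hpull ⟨j, hjm⟩ hkj (cc ⟨j + 1, by omega⟩ ⊓ w) inf_le_left
        have hle : cc ((⟨j, hjm⟩ : Fin m).castSucc) ≤ cc ⟨j + 1, by omega⟩ :=
          hmono (by simp [Fin.le_def])
        have h3 : cc ((⟨j, hjm⟩ : Fin m).castSucc) ⊓ (cc ⟨j + 1, by omega⟩ ⊓ w)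
            = cc ⟨j, by omega⟩ ⊓ w := by
          rw [← inf_assoc, inf_eq_left.2 hle]
          rfl
        rw [h3] at h2
        exact hQtrans _ _ _ h2 h1
    have hSkb : S (cc ⟨k, Nat.lt_succ_of_le hkm⟩) b := by
      refine ⟨(hQd a _ b hack hckb hQab).2, fun w hw => tail (m - k) k (by omega) le_rfl w hw⟩
    have hTk : Tmax (cc ⟨k, Nat.lt_succ_of_le hkm⟩) b := hSsub _ _ hSkb
    have hbck : b ≤ cc ⟨k, Nat.lt_succ_of_le hkm⟩ := hlift _ b hTk hack le_rfl
    have hck_eq : cc ⟨k, Nat.lt_succ_of_le hkm⟩ = b := le_antisymm hckb hbck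
    -- every covering index lies below k
    have hall : ∀ i : Fin m, (i : ℕ) < k := by
      intro i
      by_contra h
      push_neg at h
      have h1 : cc ⟨k, Nat.lt_succ_of_le hkm⟩ ≤ cc i.castSucc := hmono (by simp [Fin.le_def]; omega)
      have h2 : cc i.succ ≤ b := by rw [← hcm]; exact hmono (Fin.le_last _)
      have := lt_of_le_of_lt h1 (hcov i).lt
      rw [hck_eq] at this
      exact absurd (lt_of_lt_of_le this h2) (lt_irrefl b)
    -- forward pushout composite
    have fwd : ∀ j, (hj : j ≤ m) → Q c (cc ⟨j, by omega⟩ ⊔ c) := by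
      intro j
      induction j with
      | zero =>
        intro _
        have h0 : (⟨0, by omega⟩ : Fin (m+1)) = 0 := rfl
        rw [h0, hc0, sup_eq_right.2 hac]
        exact hQrefl c
      | succ j ih =>
        intro hj
        have hjm : j < m := by omega
        have h1 : Q c (cc ⟨j, by omega⟩ ⊔ c) := ih (by omega)
        have h2 := hpush ⟨j, hjm⟩ (hall ⟨j, hjm⟩) (cc ⟨j, by omega⟩ ⊔ c)
          (le_sup_left.trans_eq rfl)
        have hle : cc ⟨j, by omega⟩ ≤ cc ((⟨j, hjm⟩ : Fin m).succ) := hmono (by simp [Fin.le_def])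
        have h3 : cc ((⟨j, hjm⟩ : Fin m).succ) ⊔ (cc ⟨j, by omega⟩ ⊔ c)
            = cc ⟨j + 1, by omega⟩ ⊔ c := by
          rw [← sup_assoc, sup_eq_left.2 hle]
          rfl
        rw [h3] at h2
        exact hQtrans _ _ _ h1 h2
    have := fwd m le_rfl
    have hmlast : (⟨m, by omega⟩ : Fin (m+1)) = Fin.last m := rfl
    rwa [hmlast, hcm] at this
end

section
/- On the lattice [2]^{*n} (the lattice with minimum ⊥, maximum ⊤, and n pairwise incomparable middle elements 1,…,n), every wide decomposable subcategory is the weak equivalence class of some model structure, and the number of wide decomposable subcategories is 3^n + 1. -/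
variable {P : Type*}

/-- The lattice `[2]^{*n}`: a minimum `⊥`, a maximum `⊤`, and `n` pairwise
incomparable middle elements. -/
inductive StarL (n : ℕ) : Type
  | bot : StarL n
  | mid : Fin n → StarL n
  | top : StarL n
  deriving DecidableEq

namespace StarL
variable {n : ℕ}

protected def le : StarL n → StarL n → Prop
  | .bot, _ => True
  | .mid i, .mid j => i = j
  | .mid _, .top => True
  | .mid _, .bot => False
  | .top, .top => True
  | .top, _ => False

instance : PartialOrder (StarL n) where
  le := StarL.le
  le_refl a := by cases a <;> simp [StarL.le]
  le_trans a b c hab hbc := by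
    cases a <;> cases b <;> cases c <;> simp_all [StarL.le]
  le_antisymm a b hab hba := by
    cases a <;> cases b <;> simp_all [StarL.le]

protected def sup : StarL n → StarL n → StarL n
  | .bot, b => b
  | a, .bot => a
  | .top, _ => .top
  | _, .top => .top
  | .mid i, .mid j => if i = j then .mid i else .top

protected def inf : StarL n → StarL n → StarL n
  | .top, b => b
  | a, .top => a
  | .bot, _ => .bot
  | _, .bot => .bot
  | .mid i, .mid j => if i = j then .mid i else .bot

instance : Lattice (StarL n) where
  sup := StarL.sup
  le_sup_left a b := by
    cases a <;> cases b <;> simp only [StarL.sup] <;>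
      (try split_ifs) <;> simp_all [(· ≤ ·), StarL.le]
  le_sup_right a b := by
    cases a <;> cases b <;> simp only [StarL.sup] <;>
      (try split_ifs) <;> simp_all [(· ≤ ·), StarL.le]
  sup_le a b c hac hbc := by
    cases a <;> cases b <;> cases c <;> simp only [StarL.sup] <;>
      (try split_ifs) <;> simp_all [(· ≤ ·), StarL.le]
  inf := StarL.inf
  inf_le_left a b := by
    cases a <;> cases b <;> simp only [StarL.inf] <;>
      (try split_ifs) <;> simp_all [(· ≤ ·), StarL.le]
  inf_le_right a b := by
    cases a <;> cases b <;> simp only [StarL.inf] <;>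
      (try split_ifs) <;> simp_all [(· ≤ ·), StarL.le]
  le_inf a b c hab hac := by
    cases a <;> cases b <;> cases c <;> simp only [StarL.inf] <;>
      (try split_ifs) <;> simp_all [(· ≤ ·), StarL.le]

end StarL

/-!
Every arrow of `[2]^{*n}` starts at `⊥`, ends at `⊤`, or is an identity. If `Q` contains
`⊥ → ⊤`, decomposability forces `Q = (≤)`, the weak equivalences of the model structure whose
acyclic cofibrations are all arrows and whose acyclic fibrations are the identities. Otherwise
take as acyclic cofibrations the `Q`-arrows into `⊤` and as acyclic fibrations the `Q`-arrows
out of `⊥`: they lift against each other because `⊥ → ⊤ ∉ Q`, decomposability provides the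
factorizations, and since a retract of an arrow in a poset is the arrow itself, the lifting
classes then form weak factorization systems.

For the count, a wide decomposable `Q` without `⊥ → ⊤` is determined by choosing, for each
middle element `i`, nothing, `⊥ → i` or `i → ⊤` (both would compose to `⊥ → ⊤`); this gives
`3 ^ n` classes, besides `Q = (≤)`.
-/

section Lattice
variable [Lattice P] {Q : P → P → Prop}

theorem twoOutOfThree_of_isWide_of_isDecomposable (hw : IsWide Q) (hd : IsDecomposable Q) :
    TwoOutOfThree Q := fun x y z hxy hyz =>
  ⟨hw.2.2 x y z, fun _ hxz => (hd x y z hxy hyz hxz).2, fun _ hxz => (hd x y z hxy hyz hxz).1⟩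

theorem isWFS_rlp {L : P → P → Prop} (hL : ∀ a b, L a b → a ≤ b)
    (hfac : ∀ x y : P, x ≤ y → ∃ z, L x z ∧ RLP L z y) : IsWFS L (RLP L) := by
  refine ⟨hfac, fun a b => ⟨fun hab => ⟨hL a b hab, fun x y hxy hax hby => ?_⟩, ?_⟩,
    fun _ _ => Iff.rfl⟩
  · exact hxy.2 a b hab hax hby
  · rintro ⟨hab, hlift⟩
    obtain ⟨z, haz, hzb⟩ := hfac a b hab
    rwa [le_antisymm hzb.1 (hlift z b hzb (hL a z haz) le_rfl)] at haz

theorem isWFS_llp {R : P → P → Prop} (hR : ∀ x y, R x y → x ≤ y)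
    (hfac : ∀ x y : P, x ≤ y → ∃ z, LLP R x z ∧ R z y) : IsWFS (LLP R) R := by
  refine ⟨hfac, fun _ _ => Iff.rfl,
    fun x y => ⟨fun hxy => ⟨hR x y hxy, fun a b hab hax hby => ?_⟩, ?_⟩⟩
  · exact hab.2 x y hxy hax hby
  · rintro ⟨hxy, hlift⟩
    obtain ⟨z, hxz, hzy⟩ := hfac x y hxy
    rwa [← le_antisymm hxz.1 (hlift x z hxz le_rfl (hR z y hzy))] at hzy

theorem exists_isModel_of_factorizations {AC AF : P → P → Prop} (hw : IsWide Q)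
    (hd : IsDecomposable Q) (hAC : ∀ a b, AC a b → a ≤ b) (hAF : ∀ x y, AF x y → x ≤ y)
    (hfacAC : ∀ x y : P, x ≤ y → ∃ z, AC x z ∧ RLP AC z y)
    (hfacAF : ∀ x y : P, x ≤ y → ∃ z, LLP AF x z ∧ AF z y)
    (hlift : ∀ a b x y, AC a b → AF x y → a ≤ x → b ≤ y → b ≤ x)
    (hW : ∀ x y, Comp AF AC x y ↔ Q x y) :
    ∃ AC F C AF : P → P → Prop, IsModel AC F C AF ∧ ∀ x y, Comp AF AC x y ↔ Q x y := by
  have hWQ : Comp AF AC = Q := funext₂ fun x y => propext (hW x y)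
  refine ⟨AC, RLP AC, LLP AF, AF, ⟨isWFS_rlp hAC hfacAC, isWFS_llp hAF hfacAF,
    fun a b hab => ⟨hAC a b hab, fun x y hxy => hlift a b x y hab hxy⟩, ?_⟩, hW⟩
  exact hWQ ▸ twoOutOfThree_of_isWide_of_isDecomposable hw hd

end Lattice

section BoundedLattice
variable [Lattice P] [BoundedOrder P] {Q : P → P → Prop}

def topArrows (Q : P → P → Prop) (x y : P) : Prop :=
  x = y ∨ Q x y ∧ y = ⊤

def botArrows (Q : P → P → Prop) (x y : P) : Prop :=
  x = y ∨ Q x y ∧ x = ⊥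

theorem rel_of_topArrows (hw : IsWide Q) {x y : P} : topArrows Q x y → Q x y := by
  rintro (rfl | ⟨hxy, -⟩)
  exacts [hw.1 x, hxy]

theorem rel_of_botArrows (hw : IsWide Q) {x y : P} : botArrows Q x y → Q x y := by
  rintro (rfl | ⟨hxy, -⟩)
  exacts [hw.1 x, hxy]

theorem exists_topArrows_rlp (hd : IsDecomposable Q) {x y : P} (hxy : x ≤ y) :
    ∃ z, topArrows Q x z ∧ RLP (topArrows Q) z y := by
  by_cases h : Q x y ∧ y = ⊤
  · obtain ⟨hQ, rfl⟩ := h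
    exact ⟨⊤, Or.inr ⟨hQ, rfl⟩, le_rfl, fun _ _ _ _ hb => hb⟩
  refine ⟨x, Or.inl rfl, hxy, ?_⟩
  rintro a b (rfl | ⟨hab, rfl⟩) hax hby
  · exact hax
  · obtain rfl := top_le_iff.1 hby
    exact absurd ⟨(hd a x ⊤ hax le_top hab).2, rfl⟩ h

theorem exists_llp_botArrows (hd : IsDecomposable Q) {x y : P} (hxy : x ≤ y) :
    ∃ z, LLP (botArrows Q) x z ∧ botArrows Q z y := by
  by_cases h : Q x y ∧ x = ⊥
  · obtain ⟨hQ, rfl⟩ := h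
    exact ⟨⊥, ⟨le_rfl, fun _ _ _ ha _ => ha⟩, Or.inr ⟨hQ, rfl⟩⟩
  refine ⟨y, ⟨hxy, ?_⟩, Or.inl rfl⟩
  rintro a b (rfl | ⟨hab, rfl⟩) hxa hyb
  · exact hyb
  · obtain rfl := le_bot_iff.1 hxa
    exact absurd ⟨(hd ⊥ y b bot_le hyb hab).1, rfl⟩ h

theorem lift_topArrows_botArrows (hbt : ¬ Q ⊥ ⊤) {a b x y : P}
    (hab : topArrows Q a b) (hxy : botArrows Q x y) (hax : a ≤ x) (hby : b ≤ y) : b ≤ x := by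
  rcases hab with rfl | ⟨hab, rfl⟩
  · exact hax
  rcases hxy with rfl | ⟨-, rfl⟩
  · exact hby
  · exact absurd (le_bot_iff.1 hax ▸ hab) hbt

variable (hP : ∀ x y : P, x ≤ y → x = ⊥ ∨ y = ⊤ ∨ x = y)
include hP

theorem comp_botArrows_topArrows_iff (hw : IsWide Q) {x y : P} :
    Comp (botArrows Q) (topArrows Q) x y ↔ Q x y := by
  refine ⟨fun ⟨z, hxz, hzy⟩ => hw.2.2 x z y (rel_of_topArrows hw hxz) (rel_of_botArrows hw hzy),
    fun hxy => ?_⟩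
  rcases hP x y (hw.2.1 x y hxy) with rfl | rfl | rfl
  · exact ⟨⊥, Or.inl rfl, Or.inr ⟨hxy, rfl⟩⟩
  · exact ⟨⊤, Or.inr ⟨hxy, rfl⟩, Or.inl rfl⟩
  · exact ⟨x, Or.inl rfl, Or.inl rfl⟩

theorem rel_iff_le_of_rel_bot_top (hw : IsWide Q) (hd : IsDecomposable Q) (hbt : Q ⊥ ⊤)
    {x y : P} : Q x y ↔ x ≤ y := by
  refine ⟨hw.2.1 x y, fun hxy => ?_⟩
  rcases hP x y hxy with rfl | rfl | rfl
  · exact (hd ⊥ y ⊤ bot_le le_top hbt).1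
  · exact (hd ⊥ x ⊤ bot_le le_top hbt).2
  · exact hw.1 x

theorem exists_isModel_of_isWide_of_isDecomposable (hw : IsWide Q) (hd : IsDecomposable Q) :
    ∃ AC F C AF : P → P → Prop, IsModel AC F C AF ∧ ∀ x y, Comp AF AC x y ↔ Q x y := by
  by_cases hbt : Q ⊥ ⊤
  · refine exists_isModel_of_factorizations (AC := (· ≤ ·)) (AF := (· = ·)) hw hd
      (fun _ _ => id) (fun _ _ => le_of_eq)
      (fun _ y hxy => ⟨y, hxy, le_rfl, fun _ _ _ _ hb => hb⟩)
      (fun _ y hxy => ⟨y, ⟨hxy, fun _ _ hab _ hyb => hab ▸ hyb⟩, rfl⟩)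
      (fun _ _ _ _ _ hxy _ hby => hxy ▸ hby) fun x y => ?_
    rw [rel_iff_le_of_rel_bot_top hP hw hd hbt]
    exact ⟨fun ⟨_, hxz, hzy⟩ => hzy ▸ hxz, fun hxy => ⟨y, hxy, rfl⟩⟩
  · exact exists_isModel_of_factorizations hw hd
      (fun _ _ h => hw.2.1 _ _ (rel_of_topArrows hw h))
      (fun _ _ h => hw.2.1 _ _ (rel_of_botArrows hw h))
      (fun _ _ => exists_topArrows_rlp hd) (fun _ _ => exists_llp_botArrows hd)
      (fun _ _ _ _ => lift_topArrows_botArrows hbt)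
      fun _ _ => comp_botArrows_topArrows_iff hP hw

end BoundedLattice

namespace StarL
variable {n : ℕ}

instance : BoundedOrder (StarL n) where
  top := .top
  le_top x := by cases x <;> trivial
  bot := .bot
  bot_le _ := trivial

@[simp] theorem bot_eq : (⊥ : StarL n) = .bot := rfl
@[simp] theorem top_eq : (⊤ : StarL n) = .top := rfl

theorem le_iff {x y : StarL n} : x ≤ y ↔ x = ⊥ ∨ y = ⊤ ∨ x = y := by
  cases x <;> cases y <;> simp [(· ≤ ·), StarL.le]

def ofCode (f : Fin n → Fin 3) : StarL n → StarL n → Prop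
  | .bot, .mid i => f i = 1
  | .mid i, .top => f i = 2
  | x, y => x = y

theorem isWide_ofCode (f : Fin n → Fin 3) : IsWide (ofCode f) := by
  refine ⟨fun x => by cases x <;> simp [ofCode], fun x y h => ?_, fun x y z hxy hyz => ?_⟩
  · cases x <;> cases y <;> simp_all [ofCode, le_iff]
  · cases x <;> cases y <;> cases z <;> simp_all [ofCode]

theorem isDecomposable_ofCode (f : Fin n → Fin 3) : IsDecomposable (ofCode f) := by
  intro x y z hxy hyz hxz
  cases x <;> cases y <;> cases z <;> simp_all [ofCode, le_iff]

open Classical in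
noncomputable def code (Q : StarL n → StarL n → Prop) (i : Fin n) : Fin 3 :=
  if Q ⊥ (mid i) then 1 else if Q (mid i) ⊤ then 2 else 0

theorem ofCode_code {Q : StarL n → StarL n → Prop} (hw : IsWide Q) (hbt : ¬ Q ⊥ ⊤) :
    ofCode (code Q) = Q := by
  have hrefl := hw.1
  have hle (x y) (h : Q x y) : x = ⊥ ∨ y = ⊤ ∨ x = y := le_iff.1 (hw.2.1 x y h)
  have hexcl (i : Fin n) (hbot : Q ⊥ (mid i)) : ¬ Q (mid i) ⊤ := fun htop =>
    hbt (hw.2.2 _ _ _ hbot htop)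
  funext x y
  cases x <;> cases y <;> simp only [ofCode, code] <;> (try split_ifs) <;> simp_all
  all_goals first
    | exact fun h => by simpa using hle _ _ h
    | exact ⟨fun h => h ▸ hrefl _, fun h => by simpa using hle _ _ h⟩

theorem ofCode_injective : Function.Injective (ofCode (n := n)) := by
  intro f g h
  funext i
  have h1 := congrFun₂ h .bot (.mid i)
  have h2 := congrFun₂ h (.mid i) .top
  simp only [ofCode, eq_iff_iff] at h1 h2
  omega

def wideDecomposableOfCode : Option (Fin n → Fin 3) →
    {Q : StarL n → StarL n → Prop // IsWide Q ∧ IsDecomposable Q}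
  | none => ⟨(· ≤ ·), ⟨fun _ => le_rfl, fun _ _ => id, fun _ _ _ => le_trans⟩,
      fun _ _ _ hxy hyz _ => ⟨hxy, hyz⟩⟩
  | some f => ⟨ofCode f, isWide_ofCode f, isDecomposable_ofCode f⟩

theorem ofCode_ne_le (f : Fin n → Fin 3) : ofCode f ≠ (· ≤ ·) := fun h => by
  simpa [ofCode] using (congrFun₂ h ⊥ ⊤).mpr bot_le

theorem wideDecomposableOfCode_bijective :
    Function.Bijective (wideDecomposableOfCode (n := n)) := by
  refine ⟨?_, fun ⟨Q, hw, hd⟩ => ?_⟩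
  · rintro (_ | f) (_ | g) h <;> have h := congrArg Subtype.val h
    · rfl
    · exact absurd h.symm (ofCode_ne_le g)
    · exact absurd h (ofCode_ne_le f)
    · exact congrArg some (ofCode_injective h)
  by_cases hbt : Q ⊥ ⊤
  · refine ⟨none, Subtype.ext (funext₂ fun x y => propext ?_)⟩
    exact (rel_iff_le_of_rel_bot_top (fun _ _ => le_iff.1) hw hd hbt).symm
  · exact ⟨some (code Q), Subtype.ext (ofCode_code hw hbt)⟩

end StarL

/-- On `[2]^{*n}`, every wide decomposable subcategory is the class of weak
equivalences of some model structure, and there are exactly `3^n + 1` wide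
decomposable subcategories. -/
theorem starL_weakEquivalenceSets (n : ℕ) :
    (∀ Q : StarL n → StarL n → Prop, IsWide Q → IsDecomposable Q →
      ∃ AC F C AF : StarL n → StarL n → Prop,
        IsModel AC F C AF ∧ ∀ x y, Comp AF AC x y ↔ Q x y) ∧
    Nat.card {Q : StarL n → StarL n → Prop // IsWide Q ∧ IsDecomposable Q} =
      3 ^ n + 1 := by
  refine ⟨fun Q => exists_isModel_of_isWide_of_isDecomposable fun _ _ => StarL.le_iff.1, ?_⟩
  rw [← Nat.card_congr (Equiv.ofBijective _ StarL.wideDecomposableOfCode_bijective)]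
  simp
end
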